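/- arXiv:2403.13475 — 6 statements merged into one kernel-verified Lean document; each statement's English description precedes it below -/
import Mathlib

section
/- Let (X,d,ν) be a metric measure space and suppose ν is upper Ahlfors regular of dimension s > 0 with constant C_A (i.e., ν(B(x,r)) ≤ C_A r^s for all x ∈ X, r > 0). Then for all p ∈ [1,∞), u ∈ L^p(X,ν), and λ > 0, we have λ^p (ν⊗ν)({(x,y) : |u(x)-u(y)| ≥ λ d(x,y)^{s/p}}) ≤ 2^{p+1} C_A ‖u‖_{L^p(X,ν)}^p. -/
open MeasureTheory Metric Filter Topology

theorem weak_upper_bound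
    {X : Type*} [MetricSpace X] [CompleteSpace X] [SecondCountableTopology X]
    [MeasurableSpace X] [BorelSpace X]
    (ν : Measure X) [SigmaFinite ν]
    (s C_A : ℝ) (hs : 0 < s) (hCA : 0 < C_A)
    (hreg : ∀ (x : X) (r : ℝ), 0 < r → ν (ball x r) ≤ ENNReal.ofReal (C_A * r ^ s))
    (p : ℝ) (hp : 1 ≤ p) (u : X → ℝ) (hu : MemLp u (ENNReal.ofReal p) ν)
    (lam : ℝ) (hlam : 0 < lam) :
    ENNReal.ofReal (lam ^ p) *
      (ν.prod ν) {q : X × X | lam * dist q.1 q.2 ^ (s / p) ≤ |u q.1 - u q.2|} ≤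
    ENNReal.ofReal ((2 : ℝ) ^ (p + 1) * C_A) *
      ∫⁻ x, ENNReal.ofReal (|u x| ^ p) ∂ν := by
  have hp0 : (0:ℝ) < p := lt_of_lt_of_le one_pos hp
  have hps : 0 < p / s := div_pos hp0 hs
  have h := hu.aestronglyMeasurable
  set v : X → ℝ := h.mk u with hv
  have hvm : Measurable v := h.stronglyMeasurable_mk.measurable
  have huv : u =ᵐ[ν] v := h.ae_eq_mk
  set N : Set X := {x | u x ≠ v x} with hNdef
  have hN : ν N = 0 := ae_iff.1 huv
  set g : X → ℝ := fun x => (2 * |v x| / lam) ^ (p / s) with hg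
  have hg0 : ∀ x, 0 ≤ g x := fun x => Real.rpow_nonneg (by positivity) _
  have hgm : Measurable g :=
    (Real.continuous_rpow_const hps.le).measurable.comp
      ((measurable_const.mul hvm.abs).div_const lam)
  -- closed ball bound
  have hball : ∀ (x : X) (r : ℝ), 0 ≤ r →
      ν (closedBall x r) ≤ ENNReal.ofReal (C_A * r ^ s) := by
    intro x r hr
    have hcont : ContinuousAt (fun r' : ℝ => ENNReal.ofReal (C_A * r' ^ s)) r :=
      ENNReal.continuous_ofReal.continuousAt.comp
        (continuousAt_const.mul (Real.continuousAt_rpow_const r s (Or.inr hs.le)))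
    refine ge_of_tendsto (hcont.tendsto.mono_left
      (nhdsWithin_le_nhds (s := Set.Ioi r))) ?_
    filter_upwards [self_mem_nhdsWithin] with r' hr'
    exact (measure_mono (closedBall_subset_ball hr')).trans (hreg x r' (hr.trans_lt hr'))
  set S1 : Set (X × X) := {q | dist q.1 q.2 ≤ g q.1} with hS1def
  set S2 : Set (X × X) := {q | dist q.1 q.2 ≤ g q.2} with hS2def
  have hS1 : MeasurableSet S1 := measurableSet_le measurable_dist (hgm.comp measurable_fst)
  have hS2 : MeasurableSet S2 := measurableSet_le measurable_dist (hgm.comp measurable_snd)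
  -- key pointwise lemma
  have key : ∀ (x y : X) (z : ℝ), lam * dist x y ^ (s / p) ≤ 2 * |z| →
      dist x y ≤ (2 * |z| / lam) ^ (p / s) := by
    intro x y z hz
    have h1 : dist x y ^ (s / p) ≤ 2 * |z| / lam := by
      rw [le_div_iff₀ hlam, mul_comm]; exact hz
    have h2 : (dist x y ^ (s / p)) ^ (p / s) ≤ (2 * |z| / lam) ^ (p / s) :=
      Real.rpow_le_rpow (Real.rpow_nonneg dist_nonneg _) h1 hps.le
    have hmul : s / p * (p / s) = 1 := by field_simp
    rwa [← Real.rpow_mul dist_nonneg, hmul, Real.rpow_one] at h2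
  -- inclusion
  have hsub : {q : X × X | lam * dist q.1 q.2 ^ (s / p) ≤ |u q.1 - u q.2|} ⊆
      S1 ∪ S2 ∪ N ×ˢ Set.univ ∪ Set.univ ×ˢ N := by
    rintro ⟨x, y⟩ hq
    simp only [Set.mem_setOf_eq] at hq
    by_cases hx : u x = v x
    · by_cases hy : u y = v y
      · rcases le_total |v y| |v x| with hc | hc
        · left; left; left
          have : lam * dist x y ^ (s / p) ≤ 2 * |v x| := by
            calc lam * dist x y ^ (s / p) ≤ |u x - u y| := hq
            _ ≤ |u x| + |u y| := abs_sub _ _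
            _ = |v x| + |v y| := by rw [hx, hy]
            _ ≤ 2 * |v x| := by linarith
          exact key x y (v x) this
        · left; left; right
          have : lam * dist x y ^ (s / p) ≤ 2 * |v y| := by
            calc lam * dist x y ^ (s / p) ≤ |u x - u y| := hq
            _ ≤ |u x| + |u y| := abs_sub _ _
            _ = |v x| + |v y| := by rw [hx, hy]
            _ ≤ 2 * |v y| := by linarith
          exact key x y (v y) this
      · right; exact ⟨Set.mem_univ _, hy⟩
    · left; right; exact ⟨hx, Set.mem_univ _⟩
  have h0 : ν.prod ν (N ×ˢ (Set.univ : Set X)) = 0 := by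
    rw [Measure.prod_prod, hN, zero_mul]
  have h0' : ν.prod ν ((Set.univ : Set X) ×ˢ N) = 0 := by
    rw [Measure.prod_prod, hN, mul_zero]
  have hEle2 : ν.prod ν {q : X × X | lam * dist q.1 q.2 ^ (s / p) ≤ |u q.1 - u q.2|} ≤
      ν.prod ν S1 + ν.prod ν S2 := by
    calc ν.prod ν {q : X × X | lam * dist q.1 q.2 ^ (s / p) ≤ |u q.1 - u q.2|}
        ≤ ν.prod ν (S1 ∪ S2 ∪ N ×ˢ Set.univ ∪ Set.univ ×ˢ N) := measure_mono hsub
      _ ≤ ν.prod ν (S1 ∪ S2 ∪ N ×ˢ Set.univ) + ν.prod ν (Set.univ ×ˢ N) :=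
          measure_union_le _ _
      _ = ν.prod ν (S1 ∪ S2 ∪ N ×ˢ Set.univ) := by rw [h0', add_zero]
      _ ≤ ν.prod ν (S1 ∪ S2) + ν.prod ν (N ×ˢ Set.univ) := measure_union_le _ _
      _ = ν.prod ν (S1 ∪ S2) := by rw [h0, add_zero]
      _ ≤ ν.prod ν S1 + ν.prod ν S2 := measure_union_le _ _
  set I := ∫⁻ x, ENNReal.ofReal (|v x| ^ p) ∂ν with hI
  have hIu : ∫⁻ x, ENNReal.ofReal (|u x| ^ p) ∂ν = I :=
    lintegral_congr_ae (huv.mono fun x hx => by simp [hx])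
  set c : ℝ := C_A * 2 ^ p / lam ^ p with hc
  have hc0 : 0 ≤ c := by positivity
  have hgs : ∀ x, C_A * g x ^ s = c * |v x| ^ p := by
    intro x
    rw [hg]
    simp only []
    rw [← Real.rpow_mul (by positivity), div_mul_cancel₀ _ (ne_of_gt hs),
      Real.div_rpow (by positivity) hlam.le,
      Real.mul_rpow (by norm_num) (abs_nonneg _), hc]
    ring
  have hS1le : ν.prod ν S1 ≤ ENNReal.ofReal c * I := by
    rw [Measure.prod_apply hS1]
    have hsec : ∀ x, Prod.mk x ⁻¹' S1 = closedBall x (g x) := by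
      intro x; ext y
      simp [hS1def, mem_closedBall, dist_comm]
    calc ∫⁻ x, ν (Prod.mk x ⁻¹' S1) ∂ν
        ≤ ∫⁻ x, ENNReal.ofReal (C_A * g x ^ s) ∂ν := by
          refine lintegral_mono fun x => ?_
          rw [hsec x]; exact hball x (g x) (hg0 x)
      _ = ∫⁻ x, ENNReal.ofReal c * ENNReal.ofReal (|v x| ^ p) ∂ν := by
          refine lintegral_congr fun x => ?_
          rw [hgs x, ENNReal.ofReal_mul hc0]
      _ = ENNReal.ofReal c * I := lintegral_const_mul' _ _ ENNReal.ofReal_ne_top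
  have hS2le : ν.prod ν S2 ≤ ENNReal.ofReal c * I := by
    rw [Measure.prod_apply_symm hS2]
    have hsec : ∀ y, (fun x => (x, y)) ⁻¹' S2 = closedBall y (g y) := by
      intro y; ext x
      simp [hS2def, mem_closedBall, dist_comm]
    calc ∫⁻ y, ν ((fun x => (x, y)) ⁻¹' S2) ∂ν
        ≤ ∫⁻ y, ENNReal.ofReal (C_A * g y ^ s) ∂ν := by
          refine lintegral_mono fun y => ?_
          rw [hsec y]; exact hball y (g y) (hg0 y)
      _ = ∫⁻ y, ENNReal.ofReal c * ENNReal.ofReal (|v y| ^ p) ∂ν := by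
          refine lintegral_congr fun y => ?_
          rw [hgs y, ENNReal.ofReal_mul hc0]
      _ = ENNReal.ofReal c * I := lintegral_const_mul' _ _ ENNReal.ofReal_ne_top
  rw [hIu]
  calc ENNReal.ofReal (lam ^ p) *
        (ν.prod ν) {q : X × X | lam * dist q.1 q.2 ^ (s / p) ≤ |u q.1 - u q.2|}
      ≤ ENNReal.ofReal (lam ^ p) * (ENNReal.ofReal c * I + ENNReal.ofReal c * I) :=
        mul_le_mul_right (hEle2.trans (add_le_add hS1le hS2le)) _
    _ = ENNReal.ofReal (lam ^ p * (c + c)) * I := by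
        rw [← add_mul, ← ENNReal.ofReal_add hc0 hc0, ← mul_assoc,
          ← ENNReal.ofReal_mul (by positivity)]
    _ = ENNReal.ofReal ((2 : ℝ) ^ (p + 1) * C_A) * I := by
        congr 1
        have hlp : (lam : ℝ) ^ p ≠ 0 := ne_of_gt (Real.rpow_pos_of_pos hlam p)
        rw [hc, Real.rpow_add_one two_ne_zero p]
        field_simp
        ring
end

section
/- Let (X,d,ν) be a metric measure space with ν(X) = +∞. Suppose ν is upper Ahlfors regular of dimension s with constant C_A, the map r ↦ ν(B(x,r)) is continuous for every x ∈ X, and the asymptotic volume ratio AVR = lim_{r→∞} ν(B(x₀,r))/r^s exists in (0,∞). Then for all p ∈ [1,∞) and u ∈ L^p(X,ν), lim_{λ→0⁺} λ^p (ν⊗ν)(E_λ) = 2·AVR·‖u‖_{L^p(X,ν)}^p, where E_λ = {(x,y) ∈ X×X : |u(x)-u(y)| ≥ λ d(x,y)^{s/p}}. -/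
open MeasureTheory Metric Filter Topology
open scoped ENNReal NNReal

-- closed ball bound
lemma aux_cb {X : Type*} [MetricSpace X] [MeasurableSpace X]
    (ν : Measure X) (s C_A : ℝ) (hs : 0 < s) (hCA : 0 < C_A)
    (hreg : ∀ (x : X) (r : ℝ), 0 < r → ν (ball x r) ≤ ENNReal.ofReal (C_A * r ^ s))
    (x : X) (R : ℝ) (hR : 0 ≤ R) :
    ν (closedBall x R) ≤ ENNReal.ofReal (C_A * R ^ s) := by
  have hcont : ContinuousAt (fun r : ℝ => ENNReal.ofReal (C_A * r ^ s)) R := by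
    apply ENNReal.continuous_ofReal.continuousAt.comp
    apply ContinuousAt.mul continuousAt_const
    rcases eq_or_lt_of_le hR with h | h
    · exact Real.continuousAt_rpow_const R s (Or.inr hs.le)
    · exact Real.continuousAt_rpow_const R s (Or.inl h.ne')
  have h1 : Tendsto (fun r : ℝ => ENNReal.ofReal (C_A * r ^ s)) (𝓝[>] R)
      (𝓝 (ENNReal.ofReal (C_A * R ^ s))) :=
    hcont.continuousWithinAt.tendsto
  refine ge_of_tendsto h1 ?_
  filter_upwards [self_mem_nhdsWithin] with r (hr : R < r)
  exact le_trans (measure_mono (closedBall_subset_ball hr)) (hreg x r (lt_of_le_of_lt hR hr))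

lemma aux_markov {X : Type*} [MeasurableSpace X]
    (ν : Measure X) (p : ℝ) (hp : 0 < p) (u : X → ℝ) (hum : Measurable u)
    (hI : ∫⁻ x, ENNReal.ofReal (|u x| ^ p) ∂ν ≠ ⊤)
    (ε : ℝ) (hε : 0 < ε) : ν {y | ε < |u y|} ≠ ⊤ := by
  have key : ENNReal.ofReal (ε ^ p) * ν {y | ENNReal.ofReal (ε ^ p) ≤ ENNReal.ofReal (|u y| ^ p)}
      ≤ ∫⁻ x, ENNReal.ofReal (|u x| ^ p) ∂ν :=
    mul_meas_ge_le_lintegral₀ ((hum.abs.pow_const p).ennreal_ofReal.aemeasurable) _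
  have hsub : {y | ε < |u y|} ⊆ {y | ENNReal.ofReal (ε ^ p) ≤ ENNReal.ofReal (|u y| ^ p)} := by
    intro y hy
    exact ENNReal.ofReal_le_ofReal (Real.rpow_le_rpow hε.le (le_of_lt hy) hp.le)
  intro h
  have h2 : ν {y | ENNReal.ofReal (ε ^ p) ≤ ENNReal.ofReal (|u y| ^ p)} = ⊤ :=
    top_le_iff.mp (h ▸ measure_mono hsub)
  rw [h2, ENNReal.mul_top (by simp [Real.rpow_pos_of_pos hε p, ENNReal.ofReal_pos.mpr,
    (Real.rpow_pos_of_pos hε p).le])] at key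
  exact hI (top_le_iff.mp key)

lemma aux_rate {X : Type*} [MetricSpace X] [MeasurableSpace X]
    (ν : Measure X) (s : ℝ) (hs : 0 < s) (AVR : ℝ)
    (hAVRlim : ∀ x₀ : X,
      Tendsto (fun r : ℝ => (ν (ball x₀ r)).toReal / r ^ s) atTop (𝓝 AVR))
    (p : ℝ) (hp : 0 < p) (x : X) (b : ℝ) (hb : 0 < b) :
    Tendsto (fun lam : ℝ => lam ^ p * (ν (ball x ((b / lam) ^ (p / s)))).toReal)
      (𝓝[>] 0) (𝓝 (AVR * b ^ p)) := by
  have hps : 0 < p / s := div_pos hp hs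
  have hR : Tendsto (fun lam : ℝ => (b / lam) ^ (p / s)) (𝓝[>] 0) atTop :=
    (tendsto_rpow_atTop hps).comp (Tendsto.const_mul_atTop hb tendsto_inv_nhdsGT_zero
      |>.congr (by intro lam; rw [div_eq_mul_inv]))
  have h3 : Tendsto (fun lam : ℝ =>
      (ν (ball x ((b / lam) ^ (p / s)))).toReal / ((b / lam) ^ (p / s)) ^ s)
      (𝓝[>] 0) (𝓝 AVR) := (hAVRlim x).comp hR
  have h4 : Tendsto (fun lam : ℝ =>
      (ν (ball x ((b / lam) ^ (p / s)))).toReal / ((b / lam) ^ (p / s)) ^ s * b ^ p)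
      (𝓝[>] 0) (𝓝 (AVR * b ^ p)) := h3.mul_const _
  refine h4.congr' ?_
  filter_upwards [self_mem_nhdsWithin] with lam (hlam : 0 < lam)
  have hbl : 0 < b / lam := div_pos hb hlam
  have hRs : ((b / lam) ^ (p / s)) ^ s = b ^ p / lam ^ p := by
    rw [← Real.rpow_mul hbl.le, div_mul_cancel₀ _ hs.ne', Real.div_rpow hb.le hlam.le]
  rw [hRs]
  have hlp : 0 < lam ^ p := Real.rpow_pos_of_pos hlam p
  have hbp : 0 < b ^ p := Real.rpow_pos_of_pos hb p
  field_simp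

section
variable {X : Type*} [MetricSpace X] [MeasurableSpace X] [BorelSpace X]
  (ν : Measure X) (s C_A : ℝ) (hs : 0 < s) (hCA : 0 < C_A)
  (hreg : ∀ (x : X) (r : ℝ), 0 < r → ν (ball x r) ≤ ENNReal.ofReal (C_A * r ^ s))
  (AVR : ℝ) (hAVR : 0 < AVR)
  (hAVRlim : ∀ x₀ : X,
      Tendsto (fun r : ℝ => (ν (ball x₀ r)).toReal / r ^ s) atTop (𝓝 AVR))
  (p : ℝ) (hp : 0 < p) (u : X → ℝ) (hum : Measurable u)
  (hI : ∫⁻ x, ENNReal.ofReal (|u x| ^ p) ∂ν ≠ ⊤)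

include hs hCA hreg hp in
/-- basic containment: the lt-slice is inside a closed ball of controlled measure. -/
lemma aux_slice_subset (x : X) (lam : ℝ) (hlam : 0 < lam) :
    {y | lam * dist x y ^ (s / p) ≤ |u x - u y| ∧ |u y| ≤ |u x|} ⊆
      closedBall x ((2 * |u x| / lam) ^ (p / s)) := by
  intro y ⟨h1, h2⟩
  have hd : (0:ℝ) ≤ dist x y := dist_nonneg
  have h3 : |u x - u y| ≤ 2 * |u x| := by
    calc |u x - u y| ≤ |u x| + |u y| := abs_sub _ _
    _ ≤ 2 * |u x| := by linarith
  have h4 : dist x y ^ (s / p) ≤ 2 * |u x| / lam := by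
    rw [le_div_iff₀ hlam]; nlinarith [Real.rpow_nonneg hd (s/p)]
  have h5 : (dist x y ^ (s / p)) ^ (p / s) ≤ (2 * |u x| / lam) ^ (p / s) :=
    Real.rpow_le_rpow (Real.rpow_nonneg hd _) h4 (by positivity)
  rw [← Real.rpow_mul hd, div_mul_div_comm, mul_comm s p, div_self (by positivity),
    Real.rpow_one] at h5
  rw [mem_closedBall, dist_comm]
  exact h5

include hs hCA hreg hp in
lemma aux_dom (x : X) (lam : ℝ) (hlam : 0 < lam)
    (T : Set X) (hT : T ⊆ {y | lam * dist x y ^ (s / p) ≤ |u x - u y| ∧ |u y| ≤ |u x|}) :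
    ENNReal.ofReal (lam ^ p) * ν T ≤ ENNReal.ofReal (C_A * 2 ^ p) * ENNReal.ofReal (|u x| ^ p) := by
  have h1 : ν T ≤ ENNReal.ofReal (C_A * ((2 * |u x| / lam) ^ (p / s)) ^ s) := by
    refine le_trans (measure_mono (hT.trans (aux_slice_subset ν s C_A hs hCA hreg p hp u x lam hlam))) ?_
    exact aux_cb ν s C_A hs hCA hreg x _ (by positivity)
  calc ENNReal.ofReal (lam ^ p) * ν T
      ≤ ENNReal.ofReal (lam ^ p) * ENNReal.ofReal (C_A * ((2 * |u x| / lam) ^ (p / s)) ^ s) :=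
        mul_le_mul_right h1 _
    _ = ENNReal.ofReal (C_A * 2 ^ p) * ENNReal.ofReal (|u x| ^ p) := by
        rw [← ENNReal.ofReal_mul (by positivity), ← ENNReal.ofReal_mul (by positivity)]
        congr 1
        rw [← Real.rpow_mul (by positivity), div_mul_cancel₀ _ hs.ne',
          Real.div_rpow (by positivity) hlam.le,
          Real.mul_rpow (by norm_num) (abs_nonneg _)]
        field_simp

end
section
variable {X : Type*} [MetricSpace X] [MeasurableSpace X] [BorelSpace X]
  (ν : Measure X) (s C_A : ℝ) (hs : 0 < s) (hCA : 0 < C_A)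
  (hreg : ∀ (x : X) (r : ℝ), 0 < r → ν (ball x r) ≤ ENNReal.ofReal (C_A * r ^ s))
  (AVR : ℝ) (hAVR : 0 < AVR)
  (hAVRlim : ∀ x₀ : X,
      Tendsto (fun r : ℝ => (ν (ball x₀ r)).toReal / r ^ s) atTop (𝓝 AVR))
  (p : ℝ) (hp : 0 < p) (u : X → ℝ) (hum : Measurable u)
  (hI : ∫⁻ x, ENNReal.ofReal (|u x| ^ p) ∂ν ≠ ⊤)

include hs hCA hreg hAVR hAVRlim hp hum hI in
lemma aux_slice_tendsto (x : X) :
    Tendsto (fun lam : ℝ => ENNReal.ofReal (lam ^ p) *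
        ν {y | lam * dist x y ^ (s / p) ≤ |u x - u y| ∧ |u y| < |u x|})
      (𝓝[>] 0) (𝓝 (ENNReal.ofReal (AVR * |u x| ^ p))) := by
  rcases eq_or_ne (u x) 0 with ha | ha
  · have hempty : ∀ lam : ℝ, {y | lam * dist x y ^ (s / p) ≤ |u x - u y| ∧ |u y| < |u x|} = ∅ := by
      intro lam
      ext y
      simp only [Set.mem_setOf_eq, Set.mem_empty_iff_false, iff_false, not_and]
      intro _
      rw [ha, abs_zero]
      exact not_lt.mpr (abs_nonneg _)
    have : (fun lam : ℝ => ENNReal.ofReal (lam ^ p) *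
        ν {y | lam * dist x y ^ (s / p) ≤ |u x - u y| ∧ |u y| < |u x|}) = fun _ => 0 := by
      funext lam; rw [hempty lam]; simp
    rw [this, ha]
    simp [Real.zero_rpow hp.ne']
  have haa : 0 < |u x| := abs_pos.mpr ha
  set a := u x with ha_def
  -- slice finite for lam > 0
  have hfin : ∀ lam : ℝ, 0 < lam →
      ν {y | lam * dist x y ^ (s / p) ≤ |u x - u y| ∧ |u y| < |u x|} ≠ ⊤ := by
    intro lam hlam h
    have hdom := aux_dom ν s C_A hs hCA hreg p hp u x lam hlam
      {y | lam * dist x y ^ (s / p) ≤ |u x - u y| ∧ |u y| < |u x|}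
      (fun y hy => ⟨hy.1, hy.2.le⟩)
    rw [h, ENNReal.mul_top (by
      simp only [ne_eq, ENNReal.ofReal_eq_zero, not_le]
      positivity)] at hdom
    exact (ENNReal.mul_lt_top ENNReal.ofReal_lt_top ENNReal.ofReal_lt_top).ne (top_le_iff.mp hdom)
  set φ : ℝ → ℝ := fun lam =>
    lam ^ p * (ν {y | lam * dist x y ^ (s / p) ≤ |u x - u y| ∧ |u y| < |u x|}).toReal with hφ_def
  have hM : ∀ ε : ℝ, 0 < ε → ν {y | ε < |u y|} ≠ ⊤ := aux_markov ν p hp u hum hI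
  have hlampow : Tendsto (fun lam : ℝ => lam ^ p) (𝓝[>] 0) (𝓝 0) := by
    have h0 : Tendsto (fun lam : ℝ => lam ^ p) (𝓝 0) (𝓝 ((0:ℝ) ^ p)) :=
      (Real.continuousAt_rpow_const 0 p (Or.inr hp.le)).tendsto
    rw [Real.zero_rpow hp.ne'] at h0
    exact h0.mono_left nhdsWithin_le_nhds
  have hφ : Tendsto φ (𝓝[>] 0) (𝓝 (AVR * |a| ^ p)) := by
    rw [tendsto_order]
    constructor
    · -- lower bound
      intro c hc
      have h0 : Tendsto (fun ε : ℝ => |a| - ε) (𝓝[>] 0) (𝓝 |a|) := by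
        have h0' : Tendsto (fun ε : ℝ => |a| - ε) (𝓝 0) (𝓝 (|a| - 0)) :=
          (continuous_const.sub continuous_id).tendsto 0
        rw [sub_zero] at h0'
        exact h0'.mono_left nhdsWithin_le_nhds
      have h1 : Tendsto (fun ε : ℝ => AVR * (|a| - ε) ^ p) (𝓝[>] 0) (𝓝 (AVR * |a| ^ p)) :=
        (((Real.continuousAt_rpow_const |a| p (Or.inl haa.ne')).tendsto).comp h0).const_mul AVR
      obtain ⟨ε, hcψ, hε0, hεa⟩ :=
        ((h1.eventually_const_lt hc).and (Ioo_mem_nhdsGT_of_mem ⟨le_refl 0, haa⟩)).exists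
      have hb : 0 < |a| - ε := by linarith [hεa]
      -- key inclusion
      have hkey : ∀ lam : ℝ, 0 < lam →
          ball x (((|a| - ε) / lam) ^ (p / s)) ⊆
            {y | lam * dist x y ^ (s / p) ≤ |u x - u y| ∧ |u y| < |u x|} ∪ {y | ε < |u y|} := by
        intro lam hlam y hy
        by_cases hyu : ε < |u y|
        · exact Or.inr hyu
        push_neg at hyu
        left
        have hd : (0:ℝ) ≤ dist x y := dist_nonneg
        rw [mem_ball, dist_comm] at hy
        have hdp : dist x y ^ (s / p) ≤ (|a| - ε) / lam := by
          calc dist x y ^ (s / p) ≤ ((((|a| - ε) / lam) ^ (p / s))) ^ (s / p) :=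
            Real.rpow_le_rpow hd hy.le (by positivity)
          _ = (|a| - ε) / lam := by
            rw [← Real.rpow_mul (by positivity), div_mul_div_comm, mul_comm p s,
              div_self (by positivity), Real.rpow_one]
        constructor
        · have h2 : lam * dist x y ^ (s / p) ≤ |a| - ε := by
            rw [mul_comm]; exact (le_div_iff₀ hlam).mp hdp
          have h3 : |a| - ε ≤ |u x - u y| := by
            have := abs_sub_abs_le_abs_sub (u x) (u y)
            rw [← ha_def] at *
            linarith
          linarith
        · calc |u y| ≤ ε := hyu
          _ < |a| := hεa
      refine (((aux_rate ν s hs AVR hAVRlim p hp x (|a| - ε) hb).sub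
        (hlampow.mul_const (ν {y | ε < |u y|}).toReal)).eventually_const_lt
          (by simpa using hcψ)).and self_mem_nhdsWithin |>.mono ?_
      rintro lam ⟨hlt, (hlam : 0 < lam)⟩
      have hν : (ν (ball x (((|a| - ε) / lam) ^ (p / s)))).toReal ≤
          (ν {y | lam * dist x y ^ (s / p) ≤ |u x - u y| ∧ |u y| < |u x|}).toReal +
            (ν {y | ε < |u y|}).toReal := by
        have h4 := measure_mono (μ := ν) (hkey lam hlam)
        have h5 := h4.trans (measure_union_le _ _)
        rw [← ENNReal.toReal_add (hfin lam hlam) (hM ε hε0)]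
        exact ENNReal.toReal_mono (by
          simp [ENNReal.add_eq_top, hfin lam hlam, hM ε hε0]) h5
      have h6 : lam ^ p * (ν (ball x (((|a| - ε) / lam) ^ (p / s)))).toReal -
          lam ^ p * (ν {y | ε < |u y|}).toReal ≤ φ lam := by
        rw [hφ_def]
        have hlp : (0:ℝ) ≤ lam ^ p := (Real.rpow_pos_of_pos hlam p).le
        nlinarith [hν]
      calc c < _ := hlt
      _ ≤ φ lam := h6
    · -- upper bound
      intro c hc
      have h0 : Tendsto (fun ε : ℝ => |a| + 2 * ε) (𝓝[>] 0) (𝓝 |a|) := by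
        have h0' : Tendsto (fun ε : ℝ => |a| + 2 * ε) (𝓝 0) (𝓝 (|a| + 2 * 0)) :=
          (continuous_const.add (continuous_const.mul continuous_id)).tendsto 0
        rw [mul_zero, add_zero] at h0'
        exact h0'.mono_left nhdsWithin_le_nhds
      have h1 : Tendsto (fun ε : ℝ => AVR * (|a| + 2 * ε) ^ p) (𝓝[>] 0) (𝓝 (AVR * |a| ^ p)) :=
        (((Real.continuousAt_rpow_const |a| p (Or.inl haa.ne')).tendsto).comp h0).const_mul AVR
      obtain ⟨ε, hcψ, hε0⟩ := ((h1.eventually_lt_const hc).and self_mem_nhdsWithin).exists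
      replace hε0 : (0:ℝ) < ε := hε0
      have hb : 0 < |a| + 2 * ε := by linarith
      have hkey : ∀ lam : ℝ, 0 < lam →
          {y | lam * dist x y ^ (s / p) ≤ |u x - u y| ∧ |u y| < |u x|} ⊆
            ball x (((|a| + 2 * ε) / lam) ^ (p / s)) ∪ {y | ε < |u y|} := by
        intro lam hlam y ⟨hy1, _⟩
        by_cases hyu : ε < |u y|
        · exact Or.inr hyu
        push_neg at hyu
        left
        have hd : (0:ℝ) ≤ dist x y := dist_nonneg
        have h2 : |u x - u y| ≤ |a| + ε := by
          have := abs_sub (u x) (u y)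
          rw [← ha_def] at *
          linarith
        have h3 : dist x y ^ (s / p) < (|a| + 2 * ε) / lam := by
          rw [lt_div_iff₀ hlam, mul_comm]
          calc lam * dist x y ^ (s / p) ≤ |a| + ε := le_trans hy1 h2
          _ < |a| + 2 * ε := by linarith
        have h4 : (dist x y ^ (s / p)) ^ (p / s) < ((|a| + 2 * ε) / lam) ^ (p / s) :=
          Real.rpow_lt_rpow (Real.rpow_nonneg hd _) h3 (by positivity)
        rw [← Real.rpow_mul hd, div_mul_div_comm, mul_comm s p, div_self (by positivity),
          Real.rpow_one] at h4
        rw [mem_ball, dist_comm]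
        exact h4
      have hballfin : ∀ lam : ℝ, 0 < lam → ν (ball x (((|a| + 2 * ε) / lam) ^ (p / s))) ≠ ⊤ :=
        fun lam hlam => ((hreg x _ (Real.rpow_pos_of_pos (by positivity) _)).trans_lt
          ENNReal.ofReal_lt_top).ne
      refine (((aux_rate ν s hs AVR hAVRlim p hp x (|a| + 2 * ε) hb).add
        (hlampow.mul_const (ν {y | ε < |u y|}).toReal)).eventually_lt_const
          (by simpa using hcψ)).and self_mem_nhdsWithin |>.mono ?_
      rintro lam ⟨hlt, (hlam : 0 < lam)⟩
      have hν : (ν {y | lam * dist x y ^ (s / p) ≤ |u x - u y| ∧ |u y| < |u x|}).toReal ≤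
          (ν (ball x (((|a| + 2 * ε) / lam) ^ (p / s)))).toReal + (ν {y | ε < |u y|}).toReal := by
        have h4 := measure_mono (μ := ν) (hkey lam hlam)
        have h5 := h4.trans (measure_union_le _ _)
        rw [← ENNReal.toReal_add (hballfin lam hlam) (hM ε hε0)]
        exact ENNReal.toReal_mono (by
          simp [ENNReal.add_eq_top, hballfin lam hlam, hM ε hε0]) h5
      have hlp : (0:ℝ) ≤ lam ^ p := (Real.rpow_pos_of_pos hlam p).le
      calc φ lam ≤ lam ^ p * ((ν (ball x (((|a| + 2 * ε) / lam) ^ (p / s)))).toReal +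
          (ν {y | ε < |u y|}).toReal) := mul_le_mul_of_nonneg_left hν hlp
      _ = lam ^ p * (ν (ball x (((|a| + 2 * ε) / lam) ^ (p / s)))).toReal +
          lam ^ p * (ν {y | ε < |u y|}).toReal := by ring
      _ < c := hlt
  have hlift := (ENNReal.continuous_ofReal.tendsto _).comp hφ
  refine hlift.congr' ?_
  filter_upwards [self_mem_nhdsWithin] with lam (hlam : 0 < lam)
  simp only [Function.comp, hφ_def]
  rw [ENNReal.ofReal_mul (Real.rpow_nonneg hlam.le p), ENNReal.ofReal_toReal (hfin lam hlam)]

end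
section
variable {X : Type*} [MetricSpace X] [MeasurableSpace X] [BorelSpace X]
  (ν : Measure X) (s C_A : ℝ) (hs : 0 < s) (hCA : 0 < C_A)
  (hreg : ∀ (x : X) (r : ℝ), 0 < r → ν (ball x r) ≤ ENNReal.ofReal (C_A * r ^ s))
  (p : ℝ) (hp : 0 < p) (u : X → ℝ) (hum : Measurable u)
  (hI : ∫⁻ x, ENNReal.ofReal (|u x| ^ p) ∂ν ≠ ⊤)

include hs hCA hreg hp hum hI in
lemma aux_eq_slice_tendsto (x : X) :
    Tendsto (fun lam : ℝ => ENNReal.ofReal (lam ^ p) *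
        ν {y | lam * dist x y ^ (s / p) ≤ |u x - u y| ∧ |u x| = |u y|})
      (𝓝[>] 0) (𝓝 0) := by
  rcases eq_or_ne (u x) 0 with ha | ha
  · have hsingleton : ν (closedBall x 0) = 0 := by
      have := aux_cb ν s C_A hs hCA hreg x 0 le_rfl
      rwa [Real.zero_rpow hs.ne', mul_zero, ENNReal.ofReal_zero, le_zero_iff] at this
    have hzero : ∀ lam : ℝ, 0 < lam →
        ν {y | lam * dist x y ^ (s / p) ≤ |u x - u y| ∧ |u x| = |u y|} = 0 := by
      intro lam hlam
      refine measure_mono_null ?_ hsingleton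
      intro y ⟨h1, h2⟩
      have huy : u y = 0 := by
        have : |u y| = 0 := by rw [← h2, ha, abs_zero]
        exact abs_eq_zero.mp this
      rw [ha, huy, sub_zero, abs_zero] at h1
      have hd : (0:ℝ) ≤ dist x y := dist_nonneg
      have hd0 : dist x y = 0 := by
        by_contra hne
        have : 0 < dist x y ^ (s / p) :=
          Real.rpow_pos_of_pos (lt_of_le_of_ne hd (Ne.symm hne)) _
        nlinarith
      rw [mem_closedBall, dist_comm]
      exact le_of_eq hd0
    refine tendsto_const_nhds.congr' ?_
    filter_upwards [self_mem_nhdsWithin] with lam (hlam : 0 < lam)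
    rw [hzero lam hlam, mul_zero]
  · have haa : 0 < |u x| := abs_pos.mpr ha
    have hKfin : ν {y | |u x| / 2 < |u y|} ≠ ⊤ :=
      aux_markov ν p hp u hum hI (|u x| / 2) (by positivity)
    have hupper : Tendsto (fun lam : ℝ => ENNReal.ofReal (lam ^ p) * ν {y | |u x| / 2 < |u y|})
        (𝓝[>] 0) (𝓝 0) := by
      have hlampow : Tendsto (fun lam : ℝ => ENNReal.ofReal (lam ^ p)) (𝓝[>] 0) (𝓝 0) := by
        have h0 : Tendsto (fun lam : ℝ => lam ^ p) (𝓝 0) (𝓝 ((0:ℝ) ^ p)) :=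
          (Real.continuousAt_rpow_const 0 p (Or.inr hp.le)).tendsto
        rw [Real.zero_rpow hp.ne'] at h0
        have h1 : Tendsto (fun lam : ℝ => lam ^ p) (𝓝[>] 0) (𝓝 0) :=
          h0.mono_left nhdsWithin_le_nhds
        have h2 := (ENNReal.continuous_ofReal.tendsto 0).comp h1
        rw [ENNReal.ofReal_zero] at h2
        exact h2
      simpa using ENNReal.Tendsto.mul_const hlampow (Or.inr hKfin)
    refine tendsto_of_tendsto_of_tendsto_of_le_of_le tendsto_const_nhds hupper
      (fun lam => zero_le) (fun lam => ?_)
    refine mul_le_mul_right (measure_mono ?_) _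
    intro y ⟨_, h2⟩
    have : |u y| = |u x| := h2.symm
    simp only [Set.mem_setOf_eq, this]
    linarith
end
theorem weak_MS_limit
    {X : Type*} [MetricSpace X] [CompleteSpace X] [SecondCountableTopology X]
    [MeasurableSpace X] [BorelSpace X]
    (ν : Measure X) [SigmaFinite ν]
    (hX : ν Set.univ = ⊤)
    (s C_A : ℝ) (hs : 0 < s) (hCA : 0 < C_A)
    (hreg : ∀ (x : X) (r : ℝ), 0 < r → ν (ball x r) ≤ ENNReal.ofReal (C_A * r ^ s))
    (hcont : ∀ x : X, Continuous fun r : ℝ => ν (ball x r))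
    (AVR : ℝ) (hAVR : 0 < AVR)
    (hAVRlim : ∀ x₀ : X,
      Tendsto (fun r : ℝ => (ν (ball x₀ r)).toReal / r ^ s) atTop (𝓝 AVR))
    (p : ℝ) (hp : 1 ≤ p) (u : X → ℝ) (hu : MemLp u (ENNReal.ofReal p) ν) :
    Tendsto (fun lam : ℝ => ENNReal.ofReal (lam ^ p) *
        (ν.prod ν) {q : X × X | lam * dist q.1 q.2 ^ (s / p) ≤ |u q.1 - u q.2|})
      (𝓝[>] 0)
      (𝓝 (ENNReal.ofReal (2 * AVR) * ∫⁻ x, ENNReal.ofReal (|u x| ^ p) ∂ν)) := by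
  have hp0 : (0:ℝ) < p := lt_of_lt_of_le one_pos hp
  -- extract finiteness of the p-energy of u
  have hIu : ∫⁻ x, ENNReal.ofReal (|u x| ^ p) ∂ν ≠ ⊤ := by
    have h1 := hu.2
    rw [eLpNorm_eq_lintegral_rpow_enorm_toReal (by simp [ENNReal.ofReal_eq_zero, hp0, not_le])
      (by simp)] at h1
    rw [ENNReal.toReal_ofReal hp0.le] at h1
    have h2 : (∫⁻ x, (‖u x‖₊ : ℝ≥0∞) ^ p ∂ν) < ⊤ := by
      have := (ENNReal.rpow_lt_top_iff_of_pos (x := ∫⁻ x, (‖u x‖₊ : ℝ≥0∞) ^ p ∂ν)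
        (by positivity : (0:ℝ) < 1 / p)).mp h1
      exact this
    have h3 : ∀ x, (‖u x‖₊ : ℝ≥0∞) ^ p = ENNReal.ofReal (|u x| ^ p) := by
      intro x
      rw [← enorm_eq_nnnorm, ← ofReal_norm, Real.norm_eq_abs,
        ← ENNReal.ofReal_rpow_of_nonneg (abs_nonneg _) hp0.le]
    simp_rw [h3] at h2
    exact h2.ne
  -- replace u by a measurable representative v
  obtain ⟨v, hvm, huv⟩ : ∃ v : X → ℝ, Measurable v ∧ u =ᵐ[ν] v :=
    ⟨hu.1.mk u, hu.1.stronglyMeasurable_mk.measurable, hu.1.ae_eq_mk⟩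
  have heqI : (fun x => ENNReal.ofReal (|u x| ^ p)) =ᵐ[ν] fun x => ENNReal.ofReal (|v x| ^ p) :=
    huv.mono fun x hx => by simp only [hx]
  have hIv : ∫⁻ x, ENNReal.ofReal (|v x| ^ p) ∂ν ≠ ⊤ := by
    rwa [lintegral_congr_ae heqI] at hIu
  have hNprod : ∀ᵐ q ∂(ν.prod ν), u q.1 = v q.1 ∧ u q.2 = v q.2 := by
    have hN : ν {x | ¬ u x = v x} = 0 := huv
    have h1' : (ν.prod ν) ({x | ¬ u x = v x} ×ˢ (Set.univ : Set X)) = 0 := by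
      rw [Measure.prod_prod, hN, zero_mul]
    have h2' : (ν.prod ν) ((Set.univ : Set X) ×ˢ {x | ¬ u x = v x}) = 0 := by
      rw [Measure.prod_prod, hN, mul_zero]
    have h1 : (ν.prod ν) {q : X × X | ¬ u q.1 = v q.1} = 0 :=
      measure_mono_null (fun q hq => Set.mem_prod.mpr ⟨hq, Set.mem_univ q.2⟩) h1'
    have h2 : (ν.prod ν) {q : X × X | ¬ u q.2 = v q.2} = 0 :=
      measure_mono_null (fun q hq => Set.mem_prod.mpr ⟨Set.mem_univ q.1, hq⟩) h2'
    refine ((ae_iff.mpr h1).and (ae_iff.mpr h2)).mono fun q hq => hq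
  have hseteq : ∀ lam : ℝ,
      (ν.prod ν) {q : X × X | lam * dist q.1 q.2 ^ (s / p) ≤ |u q.1 - u q.2|} =
      (ν.prod ν) {q : X × X | lam * dist q.1 q.2 ^ (s / p) ≤ |v q.1 - v q.2|} := by
    intro lam
    refine measure_congr ?_
    refine Filter.eventuallyEq_set.mpr (hNprod.mono fun q hq => ?_)
    simp only [Set.mem_setOf_eq, hq.1, hq.2]
  have hIeq : ∫⁻ x, ENNReal.ofReal (|u x| ^ p) ∂ν = ∫⁻ x, ENNReal.ofReal (|v x| ^ p) ∂ν :=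
    lintegral_congr_ae heqI
  simp only [hseteq, hIeq]
  clear hseteq hIeq heqI hNprod hIu huv hu u hX hcont
  set u := v with hu_def
  -- measurable pieces
  have habs1 : Measurable fun q : X × X => |u q.1 - u q.2| :=
    ((hvm.comp measurable_fst).sub (hvm.comp measurable_snd)).abs
  have hlhs : ∀ lam : ℝ, Measurable fun q : X × X => lam * dist q.1 q.2 ^ (s / p) :=
    fun lam => (measurable_dist.pow_const (s / p)).const_mul lam
  have habsf : Measurable fun q : X × X => |u q.1| := (hvm.comp measurable_fst).abs
  have habss : Measurable fun q : X × X => |u q.2| := (hvm.comp measurable_snd).abs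
  set SLT : ℝ → Set (X × X) := fun lam =>
    {q : X × X | lam * dist q.1 q.2 ^ (s / p) ≤ |u q.1 - u q.2| ∧ |u q.2| < |u q.1|} with hSLT_def
  set SGT : ℝ → Set (X × X) := fun lam =>
    {q : X × X | lam * dist q.1 q.2 ^ (s / p) ≤ |u q.1 - u q.2| ∧ |u q.1| < |u q.2|} with hSGT_def
  set SEQ : ℝ → Set (X × X) := fun lam =>
    {q : X × X | lam * dist q.1 q.2 ^ (s / p) ≤ |u q.1 - u q.2| ∧ |u q.1| = |u q.2|} with hSEQ_def
  have hmLT : ∀ lam, MeasurableSet (SLT lam) := fun lam =>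
    (measurableSet_le (hlhs lam) habs1).inter (measurableSet_lt habss habsf)
  have hmGT : ∀ lam, MeasurableSet (SGT lam) := fun lam =>
    (measurableSet_le (hlhs lam) habs1).inter (measurableSet_lt habsf habss)
  have hmEQ : ∀ lam, MeasurableSet (SEQ lam) := fun lam =>
    (measurableSet_le (hlhs lam) habs1).inter (measurableSet_eq_fun habsf habss)
  -- decomposition of the measure
  have hdecomp : ∀ lam : ℝ,
      (ν.prod ν) {q : X × X | lam * dist q.1 q.2 ^ (s / p) ≤ |u q.1 - u q.2|} =
      (ν.prod ν) (SLT lam) + (ν.prod ν) (SGT lam) + (ν.prod ν) (SEQ lam) := by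
    intro lam
    have hsplit : {q : X × X | lam * dist q.1 q.2 ^ (s / p) ≤ |u q.1 - u q.2|} =
        (SLT lam ∪ SGT lam) ∪ SEQ lam := by
      ext q
      simp only [hSLT_def, hSGT_def, hSEQ_def, Set.mem_union, Set.mem_setOf_eq]
      constructor
      · intro h
        rcases lt_trichotomy |u q.1| |u q.2| with h1 | h1 | h1
        · exact Or.inl (Or.inr ⟨h, h1⟩)
        · exact Or.inr ⟨h, h1⟩
        · exact Or.inl (Or.inl ⟨h, h1⟩)
      · rintro ((⟨h, _⟩ | ⟨h, _⟩) | ⟨h, _⟩) <;> exact h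
    have hd1 : Disjoint (SLT lam) (SGT lam) := by
      rw [Set.disjoint_left]
      rintro q ⟨_, h1⟩ ⟨_, h2⟩
      exact absurd h2 (not_lt.mpr h1.le)
    have hd2 : Disjoint (SLT lam ∪ SGT lam) (SEQ lam) := by
      rw [Set.disjoint_union_left]
      constructor
      · rw [Set.disjoint_left]
        rintro q ⟨_, h1⟩ ⟨_, h2⟩
        exact absurd h2 (ne_of_gt h1)
      · rw [Set.disjoint_left]
        rintro q ⟨_, h1⟩ ⟨_, h2⟩
        exact absurd h2 (ne_of_lt h1)
    rw [hsplit, measure_union hd2 (hmEQ lam), measure_union hd1 (hmGT lam)]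
  -- symmetry
  have hswap : ∀ lam : ℝ, (ν.prod ν) (SGT lam) = (ν.prod ν) (SLT lam) := by
    intro lam
    have h1 : (ν.prod ν) (SLT lam) = (Measure.map Prod.swap (ν.prod ν)) (SLT lam) := by
      rw [Measure.prod_swap]
    rw [h1, Measure.map_apply measurable_swap (hmLT lam)]
    congr 1
    ext q
    simp only [hSLT_def, hSGT_def, Set.mem_preimage, Prod.fst_swap, Prod.snd_swap,
      Set.mem_setOf_eq, Prod.swap]
    rw [dist_comm, abs_sub_comm]
  -- Tonelli slices
  have hsliceLT : ∀ lam : ℝ, (ν.prod ν) (SLT lam) =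
      ∫⁻ x, ν {y | lam * dist x y ^ (s / p) ≤ |u x - u y| ∧ |u y| < |u x|} ∂ν := by
    intro lam
    rw [Measure.prod_apply (hmLT lam)]
    rfl
  have hsliceEQ : ∀ lam : ℝ, (ν.prod ν) (SEQ lam) =
      ∫⁻ x, ν {y | lam * dist x y ^ (s / p) ≤ |u x - u y| ∧ |u x| = |u y|} ∂ν := by
    intro lam
    rw [Measure.prod_apply (hmEQ lam)]
    rfl
  -- DCT 1 : the strict part
  set I := ∫⁻ x, ENNReal.ofReal (|u x| ^ p) ∂ν with hI_def
  have hbound_meas : Measurable fun x => ENNReal.ofReal (|u x| ^ p) :=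
    (hvm.abs.pow_const p).ennreal_ofReal
  have hDCT1 : Tendsto (fun lam : ℝ =>
      ∫⁻ x, ENNReal.ofReal (lam ^ p) *
        ν {y | lam * dist x y ^ (s / p) ≤ |u x - u y| ∧ |u y| < |u x|} ∂ν)
      (𝓝[>] 0) (𝓝 (∫⁻ x, ENNReal.ofReal (AVR * |u x| ^ p) ∂ν)) := by
    refine tendsto_lintegral_filter_of_dominated_convergence
      (fun x => ENNReal.ofReal (C_A * 2 ^ p) * ENNReal.ofReal (|u x| ^ p)) ?_ ?_ ?_ ?_
    · refine Eventually.of_forall fun lam => ?_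
      exact (measurable_measure_prodMk_left (hmLT lam)).const_mul (ENNReal.ofReal (lam ^ p))
    · filter_upwards [self_mem_nhdsWithin] with lam (hlam : 0 < lam)
      refine Eventually.of_forall fun x => ?_
      exact aux_dom ν s C_A hs hCA hreg p hp0 u x lam hlam _ fun y hy => ⟨hy.1, hy.2.le⟩
    · rw [lintegral_const_mul _ hbound_meas]
      exact ENNReal.mul_ne_top ENNReal.ofReal_ne_top hIv
    · refine Eventually.of_forall fun x => ?_
      exact aux_slice_tendsto ν s C_A hs hCA hreg AVR hAVR hAVRlim p hp0 u hvm hIv x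
  have hlim1 : Tendsto (fun lam : ℝ => ENNReal.ofReal (lam ^ p) * (ν.prod ν) (SLT lam))
      (𝓝[>] 0) (𝓝 (ENNReal.ofReal AVR * I)) := by
    have heq : (fun lam : ℝ => ENNReal.ofReal (lam ^ p) * (ν.prod ν) (SLT lam)) =
        fun lam : ℝ => ∫⁻ x, ENNReal.ofReal (lam ^ p) *
          ν {y | lam * dist x y ^ (s / p) ≤ |u x - u y| ∧ |u y| < |u x|} ∂ν := by
      funext lam
      rw [hsliceLT lam, lintegral_const_mul]
      exact measurable_measure_prodMk_left (hmLT lam)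
    rw [heq]
    have heq2 : ∫⁻ x, ENNReal.ofReal (AVR * |u x| ^ p) ∂ν = ENNReal.ofReal AVR * I := by
      rw [hI_def, ← lintegral_const_mul _ hbound_meas]
      congr 1
      funext x
      rw [ENNReal.ofReal_mul hAVR.le]
    rw [← heq2]
    exact hDCT1
  -- DCT 2 : the equal part
  have hlim2 : Tendsto (fun lam : ℝ => ENNReal.ofReal (lam ^ p) * (ν.prod ν) (SEQ lam))
      (𝓝[>] 0) (𝓝 0) := by
    have heq : (fun lam : ℝ => ENNReal.ofReal (lam ^ p) * (ν.prod ν) (SEQ lam)) =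
        fun lam : ℝ => ∫⁻ x, ENNReal.ofReal (lam ^ p) *
          ν {y | lam * dist x y ^ (s / p) ≤ |u x - u y| ∧ |u x| = |u y|} ∂ν := by
      funext lam
      rw [hsliceEQ lam, lintegral_const_mul]
      exact measurable_measure_prodMk_left (hmEQ lam)
    rw [heq]
    have h0 : (0 : ℝ≥0∞) = ∫⁻ _, (0:ℝ≥0∞) ∂ν := by simp
    rw [h0]
    refine tendsto_lintegral_filter_of_dominated_convergence
      (fun x => ENNReal.ofReal (C_A * 2 ^ p) * ENNReal.ofReal (|u x| ^ p)) ?_ ?_ ?_ ?_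
    · refine Eventually.of_forall fun lam => ?_
      exact (measurable_measure_prodMk_left (hmEQ lam)).const_mul _
    · filter_upwards [self_mem_nhdsWithin] with lam (hlam : 0 < lam)
      refine Eventually.of_forall fun x => ?_
      refine aux_dom ν s C_A hs hCA hreg p hp0 u x lam hlam _ fun y hy => ⟨hy.1, le_of_eq hy.2.symm⟩
    · rw [lintegral_const_mul _ hbound_meas]
      exact ENNReal.mul_ne_top ENNReal.ofReal_ne_top hIv
    · refine Eventually.of_forall fun x => ?_
      exact aux_eq_slice_tendsto ν s C_A hs hCA hreg p hp0 u hvm hIv x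
  -- assemble
  have hfinal : Tendsto (fun lam : ℝ =>
      ENNReal.ofReal (lam ^ p) * (ν.prod ν) (SLT lam) +
      ENNReal.ofReal (lam ^ p) * (ν.prod ν) (SGT lam) +
      ENNReal.ofReal (lam ^ p) * (ν.prod ν) (SEQ lam))
      (𝓝[>] 0) (𝓝 (ENNReal.ofReal AVR * I + ENNReal.ofReal AVR * I + 0)) := by
    refine Tendsto.add ?_ hlim2
    refine Tendsto.add hlim1 ?_
    have : (fun lam : ℝ => ENNReal.ofReal (lam ^ p) * (ν.prod ν) (SGT lam)) =
        fun lam : ℝ => ENNReal.ofReal (lam ^ p) * (ν.prod ν) (SLT lam) := by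
      funext lam; rw [hswap lam]
    rw [this]
    exact hlim1
  have hval : ENNReal.ofReal AVR * I + ENNReal.ofReal AVR * I + 0 = ENNReal.ofReal (2 * AVR) * I := by
    rw [add_zero, ← two_mul, ← mul_assoc]
    congr 1
    rw [ENNReal.ofReal_mul (by norm_num : (0:ℝ) ≤ 2)]
    congr 1
    simp
  rw [hval] at hfinal
  refine hfinal.congr ?_
  intro lam
  rw [hdecomp lam, mul_add, mul_add]
end

section
/- Let (X,d,ν) be a metric measure space with ν(X) = +∞, ν upper Ahlfors regular of dimension s with constant C_A, r ↦ ν(B(x,r)) continuous for each x, and AVR = lim_{r→∞} ν(B(x₀,r))/r^s ∈ (0,∞). Then for all p ∈ [1,∞) and u ∈ L^p(X,ν): 2·AVR·‖u‖_{L^p}^p ≤ [ (u(x)-u(y))/d(x,y)^{s/p} ]^p_{L^p_w(X×X, ν⊗ν)} ≤ 2^{p+1} C_A ‖u‖_{L^p}^p. -/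
open MeasureTheory Metric Filter Topology

lemma msb_closedBall_meas {X : Type*} [MetricSpace X] [MeasurableSpace X]
    (ν : Measure X) (s C_A : ℝ) (hs : 0 < s)
    (hreg : ∀ (x : X) (r : ℝ), 0 < r → ν (ball x r) ≤ ENNReal.ofReal (C_A * r ^ s))
    (x : X) (r : ℝ) (hr : 0 ≤ r) : ν (closedBall x r) ≤ ENNReal.ofReal (C_A * r ^ s) := by
  have hlim : Tendsto (fun n : ℕ => ENNReal.ofReal (C_A * (r + 1 / (n + 1)) ^ s)) atTop
      (𝓝 (ENNReal.ofReal (C_A * r ^ s))) := by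
    apply ENNReal.tendsto_ofReal
    have h1 : Tendsto (fun n : ℕ => r + 1 / ((n : ℝ) + 1)) atTop (𝓝 r) := by
      simpa using tendsto_const_nhds.add (tendsto_one_div_add_atTop_nhds_zero_nat (𝕜 := ℝ))
    exact (((Real.continuous_rpow_const hs.le).tendsto r).comp h1).const_mul C_A
  refine ge_of_tendsto' hlim fun n => ?_
  refine le_trans (measure_mono (closedBall_subset_ball ?_)) (hreg x _ ?_) <;>
    have : (0:ℝ) < 1 / ((n : ℝ) + 1) := by positivity
  · linarith
  · linarith

lemma msb_upper {X : Type*} [MetricSpace X] [SecondCountableTopology X]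
    [MeasurableSpace X] [BorelSpace X]
    (ν : Measure X) [SigmaFinite ν]
    (s C_A : ℝ) (hs : 0 < s) (hCA : 0 < C_A)
    (hreg : ∀ (x : X) (r : ℝ), 0 < r → ν (ball x r) ≤ ENNReal.ofReal (C_A * r ^ s))
    (p : ℝ) (hp : 1 ≤ p) (u : X → ℝ) (hm : Measurable u)
    (lam : ℝ) (hlam : 0 < lam) :
    ENNReal.ofReal (lam ^ p) *
        (ν.prod ν) {q : X × X | lam * dist q.1 q.2 ^ (s / p) ≤ |u q.1 - u q.2|} ≤
      ENNReal.ofReal ((2 : ℝ) ^ (p + 1) * C_A) *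
        ∫⁻ x, ENNReal.ofReal (|u x| ^ p) ∂ν := by
  have hps : (0:ℝ) < p := lt_of_lt_of_le one_pos hp
  have hsp : (0:ℝ) < s / p := div_pos hs hps
  set S1 : Set (X × X) := {q : X × X | lam * dist q.1 q.2 ^ (s / p) ≤ 2 * |u q.1|} with hS1
  have mdist : Measurable fun q : X × X => lam * dist q.1 q.2 ^ (s / p) :=
    (((Real.continuous_rpow_const hsp.le).comp continuous_dist).measurable).const_mul lam
  have mS1 : MeasurableSet S1 :=
    measurableSet_le mdist (((hm.comp measurable_fst).abs).const_mul 2)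
  have mE : MeasurableSet {q : X × X | lam * dist q.1 q.2 ^ (s / p) ≤ |u q.1 - u q.2|} :=
    measurableSet_le mdist ((hm.comp measurable_fst).sub (hm.comp measurable_snd)).abs
  -- E ⊆ S1 ∪ swap ⁻¹' S1
  have hsub : {q : X × X | lam * dist q.1 q.2 ^ (s / p) ≤ |u q.1 - u q.2|} ⊆
      S1 ∪ Prod.swap ⁻¹' S1 := by
    intro q hq
    simp only [Set.mem_setOf_eq] at hq
    have h2 : |u q.1 - u q.2| ≤ |u q.1| + |u q.2| := abs_sub (u q.1) (u q.2)
    rcases le_total (|u q.2|) (|u q.1|) with h | h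
    · left; simp only [hS1, Set.mem_setOf_eq]; linarith
    · right
      simp only [hS1, Set.mem_preimage, Set.mem_setOf_eq, Prod.fst_swap, Prod.snd_swap, dist_comm]
      linarith
  -- measure of S1
  have hS1bound : ENNReal.ofReal (lam ^ p) * (ν.prod ν) S1 ≤
      ENNReal.ofReal ((2:ℝ) ^ p * C_A) * ∫⁻ x, ENNReal.ofReal (|u x| ^ p) ∂ν := by
    have hprod : (ν.prod ν) S1 = ∫⁻ x, ν (Prod.mk x ⁻¹' S1) ∂ν := Measure.prod_apply mS1
    have hsec : ∀ x : X, ν (Prod.mk x ⁻¹' S1) ≤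
        ENNReal.ofReal (C_A * (2 * |u x| / lam) ^ p) := by
      intro x
      have hsub2 : Prod.mk x ⁻¹' S1 ⊆ closedBall x ((2 * |u x| / lam) ^ (p / s)) := by
        intro y hy
        simp only [hS1, Set.mem_preimage, Set.mem_setOf_eq] at hy
        have h1 : dist x y ^ (s / p) ≤ 2 * |u x| / lam :=
          (le_div_iff₀' hlam).2 hy
        have h2 : (dist x y ^ (s / p)) ^ (p / s) ≤ (2 * |u x| / lam) ^ (p / s) :=
          Real.rpow_le_rpow (Real.rpow_nonneg dist_nonneg _) h1 (le_of_lt (div_pos hps hs))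
        have h3 : (dist x y ^ (s / p)) ^ (p / s) = dist x y := by
          rw [show p / s = (s / p)⁻¹ by rw [inv_div], Real.rpow_rpow_inv dist_nonneg hsp.ne']
        rw [mem_closedBall, dist_comm, ← h3]
        exact h2
      refine (measure_mono hsub2).trans ?_
      have := msb_closedBall_meas ν s C_A hs hreg x ((2 * |u x| / lam) ^ (p / s))
        (Real.rpow_nonneg (by positivity) _)
      refine this.trans (le_of_eq ?_)
      congr 1
      rw [← Real.rpow_mul (by positivity), div_mul_cancel₀ _ hs.ne']
    calc ENNReal.ofReal (lam ^ p) * (ν.prod ν) S1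
        ≤ ENNReal.ofReal (lam ^ p) * ∫⁻ x, ENNReal.ofReal (C_A * (2 * |u x| / lam) ^ p) ∂ν := by
          rw [hprod]; exact mul_le_mul_right (lintegral_mono hsec) _
      _ = ∫⁻ x, ENNReal.ofReal (lam ^ p) * ENNReal.ofReal (C_A * (2 * |u x| / lam) ^ p) ∂ν :=
          (lintegral_const_mul' _ _ ENNReal.ofReal_ne_top).symm
      _ = ∫⁻ x, ENNReal.ofReal ((2:ℝ) ^ p * C_A) * ENNReal.ofReal (|u x| ^ p) ∂ν := by
          refine lintegral_congr fun x => ?_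
          rw [← ENNReal.ofReal_mul (Real.rpow_nonneg hlam.le _),
            ← ENNReal.ofReal_mul (by positivity)]
          congr 1
          rw [Real.div_rpow (by positivity) hlam.le, Real.mul_rpow (by norm_num) (abs_nonneg _)]
          have hl : lam ^ p ≠ 0 := (Real.rpow_pos_of_pos hlam p).ne'
          field_simp
      _ = ENNReal.ofReal ((2:ℝ) ^ p * C_A) * ∫⁻ x, ENNReal.ofReal (|u x| ^ p) ∂ν :=
          lintegral_const_mul' _ _ ENNReal.ofReal_ne_top
  -- assemble
  have hswap : (ν.prod ν) (Prod.swap ⁻¹' S1) = (ν.prod ν) S1 := by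
    rw [← Measure.map_apply measurable_swap mS1, Measure.prod_swap]
  calc ENNReal.ofReal (lam ^ p) *
        (ν.prod ν) {q : X × X | lam * dist q.1 q.2 ^ (s / p) ≤ |u q.1 - u q.2|}
      ≤ ENNReal.ofReal (lam ^ p) * ((ν.prod ν) S1 + (ν.prod ν) (Prod.swap ⁻¹' S1)) :=
        mul_le_mul_right ((measure_mono hsub).trans (measure_union_le _ _)) _
    _ = 2 * (ENNReal.ofReal (lam ^ p) * (ν.prod ν) S1) := by rw [hswap]; ring
    _ ≤ 2 * (ENNReal.ofReal ((2:ℝ) ^ p * C_A) * ∫⁻ x, ENNReal.ofReal (|u x| ^ p) ∂ν) :=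
        mul_le_mul_right hS1bound 2
    _ = ENNReal.ofReal ((2:ℝ) ^ (p + 1) * C_A) * ∫⁻ x, ENNReal.ofReal (|u x| ^ p) ∂ν := by
        rw [← mul_assoc]
        congr 1
        rw [show (2 : ENNReal) = ENNReal.ofReal 2 by simp, ← ENNReal.ofReal_mul (by norm_num)]
        congr 1
        rw [Real.rpow_add_one (by norm_num : (2:ℝ) ≠ 0) p]
        ring

lemma msb_lower {X : Type*} [MetricSpace X] [SecondCountableTopology X]
    [MeasurableSpace X] [BorelSpace X]
    (ν : Measure X) [SigmaFinite ν]
    (s C_A : ℝ) (hs : 0 < s) (hCA : 0 < C_A)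
    (hreg : ∀ (x : X) (r : ℝ), 0 < r → ν (ball x r) ≤ ENNReal.ofReal (C_A * r ^ s))
    (AVR : ℝ) (hAVR : 0 < AVR)
    (hAVRlim : ∀ x₀ : X,
      Tendsto (fun r : ℝ => (ν (ball x₀ r)).toReal / r ^ s) atTop (𝓝 AVR))
    (p : ℝ) (hp : 1 ≤ p) (u : X → ℝ) (hm : Measurable u)
    (hu : MemLp u (ENNReal.ofReal p) ν)
    (θ : ℝ) (hθ0 : 0 < θ) (hθ1 : θ < 1) :
    ENNReal.ofReal (2 * ((1 - θ) ^ p * AVR)) * ∫⁻ x, ENNReal.ofReal (|u x| ^ p) ∂ν ≤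
      ⨆ lam > (0:ℝ), ENNReal.ofReal (lam ^ p) *
        (ν.prod ν) {q : X × X | lam * dist q.1 q.2 ^ (s / p) ≤ |u q.1 - u q.2|} := by
  have hps : (0:ℝ) < p := lt_of_lt_of_le one_pos hp
  have hsp : (0:ℝ) < s / p := div_pos hs hps
  set lam : ℕ → ℝ := fun n => ((n : ℝ) + 1)⁻¹ with hlamdef
  have hlampos : ∀ n, 0 < lam n := fun n => by positivity
  have hlamle : ∀ n, lam n ≤ 1 := fun n => by
    rw [hlamdef]
    have h1 : (1:ℝ) ≤ (n:ℝ) + 1 := by linarith [Nat.cast_nonneg (α := ℝ) n]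
    rw [inv_le_one₀ (by linarith)]
    exact h1
  have hlam0 : Tendsto lam atTop (𝓝 0) := by
    simpa [hlamdef, one_div] using tendsto_one_div_add_atTop_nhds_zero_nat (𝕜 := ℝ)
  have hlamp0 : Tendsto (fun n => lam n ^ p) atTop (𝓝 0) := by
    refine squeeze_zero (fun n => (Real.rpow_pos_of_pos (hlampos n) p).le) (fun n => ?_) hlam0
    calc lam n ^ p ≤ lam n ^ (1:ℝ) :=
          Real.rpow_le_rpow_of_exponent_ge (hlampos n) (hlamle n) hp
      _ = lam n := Real.rpow_one _
  -- sets
  set E : ℕ → Set (X × X) := fun n =>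
    {q : X × X | lam n * dist q.1 q.2 ^ (s / p) ≤ |u q.1 - u q.2|} with hEdef
  set T : ℕ → Set (X × X) := fun n => E n ∩ {q : X × X | |u q.2| < θ * |u q.1|} with hTdef
  have mdist : ∀ n, Measurable fun q : X × X => lam n * dist q.1 q.2 ^ (s / p) := fun n =>
    (((Real.continuous_rpow_const hsp.le).comp continuous_dist).measurable).const_mul (lam n)
  have mE : ∀ n, MeasurableSet (E n) := fun n =>
    measurableSet_le (mdist n) ((hm.comp measurable_fst).sub (hm.comp measurable_snd)).abs
  have mT : ∀ n, MeasurableSet (T n) := fun n =>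
    (mE n).inter (measurableSet_lt (hm.comp measurable_snd).abs
      ((hm.comp measurable_fst).abs.const_mul θ))
  -- the key pointwise liminf bound
  have key : ∀ x : X, ENNReal.ofReal (((1 - θ) * |u x|) ^ p * AVR) ≤
      atTop.liminf fun n => ENNReal.ofReal (lam n ^ p) * ν (Prod.mk x ⁻¹' T n) := by
    intro x
    by_cases hx : u x = 0
    · simp [hx, Real.zero_rpow hps.ne']
    · set a := |u x| with hadef
      have ha : 0 < a := abs_pos.2 hx
      have h1θ : (0:ℝ) < 1 - θ := by linarith
      set c := (1 - θ) * a with hcdef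
      have hc : 0 < c := by positivity
      set r : ℕ → ℝ := fun n => (c / lam n) ^ (p / s) with hrdef
      have hrpos : ∀ n, 0 < r n := fun n =>
        Real.rpow_pos_of_pos (div_pos hc (hlampos n)) _
      set B : Set X := {y : X | θ * a ≤ |u y|} with hBdef
      have hBfin : ν B ≠ ⊤ := by
        have hp0 : ENNReal.ofReal p ≠ 0 := by
          simp only [ne_eq, ENNReal.ofReal_eq_zero, not_le]; exact hps
        have := hu.meas_ge_lt_top' hp0 ENNReal.ofReal_ne_top
          (ε := ENNReal.ofReal (θ * a)) (by
            simp only [ne_eq, ENNReal.ofReal_eq_zero, not_le]; positivity)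
        refine ne_of_lt (lt_of_le_of_lt (le_of_eq ?_) this)
        congr 1
        ext y
        simp only [hBdef, Set.mem_setOf_eq, ← ENNReal.ofReal_coe_nnreal, coe_nnnorm,
          Real.norm_eq_abs]
        rw [ENNReal.ofReal_le_ofReal_iff (abs_nonneg _)]
      set bR := (ν B).toReal with hbRdef
      have hAfin : ∀ n, ν (ball x (r n)) ≠ ⊤ := fun n =>
        ne_of_lt (lt_of_le_of_lt (hreg x _ (hrpos n)) ENNReal.ofReal_lt_top)
      -- inclusion
      have hsub : ∀ n, ball x (r n) ⊆ (Prod.mk x ⁻¹' T n) ∪ B := by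
        intro n y hy
        by_cases hyB : θ * a ≤ |u y|
        · exact Or.inr hyB
        push_neg at hyB
        left
        rw [mem_ball'] at hy
        have hd : dist x y ^ (s / p) ≤ c / lam n := by
          have h1 : dist x y ^ (s / p) ≤ (r n) ^ (s / p) :=
            Real.rpow_le_rpow dist_nonneg (le_of_lt hy) hsp.le
          have h2 : (r n) ^ (s / p) = c / lam n := by
            rw [hrdef]
            rw [show s / p = (p / s)⁻¹ by rw [inv_div],
              Real.rpow_rpow_inv (div_nonneg hc.le (hlampos n).le) (div_pos hps hs).ne']
          rwa [h2] at h1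
        have hE' : lam n * dist x y ^ (s / p) ≤ |u x - u y| := by
          have h3 : lam n * dist x y ^ (s / p) ≤ c := by
            calc lam n * dist x y ^ (s / p) ≤ lam n * (c / lam n) :=
                  mul_le_mul_of_nonneg_left hd (hlampos n).le
              _ = c := by field_simp [(hlampos n).ne']
          have h4 : a - |u y| ≤ |u x - u y| := by
            have := abs_sub_abs_le_abs_sub (u x) (u y)
            rw [← hadef] at this; linarith
          have : c ≤ a - |u y| := by rw [hcdef]; nlinarith
          linarith
        exact ⟨hE', hyB⟩
      -- lower bound for each n
      have lower : ∀ n, ENNReal.ofReal (lam n ^ p * ((ν (ball x (r n))).toReal - bR)) ≤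
          ENNReal.ofReal (lam n ^ p) * ν (Prod.mk x ⁻¹' T n) := by
        intro n
        rw [ENNReal.ofReal_mul (Real.rpow_nonneg (hlampos n).le _)]
        refine mul_le_mul_right ?_ _
        have heq : ENNReal.ofReal ((ν (ball x (r n))).toReal - bR) =
            ν (ball x (r n)) - ν B := by
          rw [hbRdef, ENNReal.ofReal_sub _ ENNReal.toReal_nonneg,
            ENNReal.ofReal_toReal (hAfin n), ENNReal.ofReal_toReal hBfin]
        rw [heq]
        exact tsub_le_iff_right.2 ((measure_mono (hsub n)).trans (measure_union_le _ _))
      -- tendsto of the real sequence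
      have hrtend : Tendsto r atTop atTop := by
        refine (tendsto_rpow_atTop (div_pos hps hs)).comp ?_
        have h5 : Tendsto (fun n : ℕ => (n : ℝ) + 1) atTop atTop :=
          tendsto_atTop_add_const_right atTop 1 tendsto_natCast_atTop_atTop
        have h6 : ∀ n : ℕ, c / lam n = c * ((n : ℝ) + 1) := by
          intro n; rw [hlamdef]; field_simp
        simpa only [h6] using h5.const_mul_atTop hc
      have hQ : Tendsto (fun n => (ν (ball x (r n))).toReal / r n ^ s) atTop (𝓝 AVR) :=
        (hAVRlim x).comp hrtend
      have hid : ∀ n, lam n ^ p * ((ν (ball x (r n))).toReal - bR) =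
          c ^ p * ((ν (ball x (r n))).toReal / r n ^ s) - lam n ^ p * bR := by
        intro n
        have hr0 : r n ^ s ≠ 0 := (Real.rpow_pos_of_pos (hrpos n) s).ne'
        have h1 : r n ^ s = (c / lam n) ^ p := by
          rw [hrdef, ← Real.rpow_mul (div_nonneg hc.le (hlampos n).le),
            div_mul_cancel₀ _ hs.ne']
        have h2 : lam n ^ p * (c / lam n) ^ p = c ^ p := by
          rw [← Real.mul_rpow (hlampos n).le (div_nonneg hc.le (hlampos n).le)]
          congr 1; field_simp [(hlampos n).ne']
        have h3 : c ^ p = lam n ^ p * r n ^ s := by rw [h1, h2]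
        rw [h3]; field_simp
      have htend : Tendsto (fun n => lam n ^ p * ((ν (ball x (r n))).toReal - bR)) atTop
          (𝓝 (c ^ p * AVR)) := by
        simp only [hid]
        have := (hQ.const_mul (c ^ p)).sub (hlamp0.mul_const bR)
        simpa using this
      -- conclude
      have hliminf := (ENNReal.tendsto_ofReal htend).liminf_eq
      calc ENNReal.ofReal (((1 - θ) * |u x|) ^ p * AVR)
          = atTop.liminf fun n =>
              ENNReal.ofReal (lam n ^ p * ((ν (ball x (r n))).toReal - bR)) := by
            rw [hliminf, ← hadef, ← hcdef]
        _ ≤ atTop.liminf fun n => ENNReal.ofReal (lam n ^ p) * ν (Prod.mk x ⁻¹' T n) :=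
            Filter.liminf_le_liminf (Eventually.of_forall lower)
  -- Fatou
  have fatou : ∫⁻ x, ENNReal.ofReal (((1 - θ) * |u x|) ^ p * AVR) ∂ν ≤
      atTop.liminf fun n => ENNReal.ofReal (lam n ^ p) * (ν.prod ν) (T n) := by
    calc ∫⁻ x, ENNReal.ofReal (((1 - θ) * |u x|) ^ p * AVR) ∂ν
        ≤ ∫⁻ x, atTop.liminf (fun n => ENNReal.ofReal (lam n ^ p) *
            ν (Prod.mk x ⁻¹' T n)) ∂ν := lintegral_mono key
      _ ≤ atTop.liminf fun n => ∫⁻ x, ENNReal.ofReal (lam n ^ p) *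
            ν (Prod.mk x ⁻¹' T n) ∂ν :=
          lintegral_liminf_le fun n =>
            (measurable_measure_prodMk_left (mT n)).const_mul _
      _ = atTop.liminf fun n => ENNReal.ofReal (lam n ^ p) * (ν.prod ν) (T n) := by
          refine Filter.liminf_congr (Eventually.of_forall fun n => ?_)
          rw [lintegral_const_mul' _ _ ENNReal.ofReal_ne_top, ← Measure.prod_apply (mT n)]
  -- LHS integral identity
  have hLHS : ∫⁻ x, ENNReal.ofReal (((1 - θ) * |u x|) ^ p * AVR) ∂ν =
      ENNReal.ofReal ((1 - θ) ^ p * AVR) * ∫⁻ x, ENNReal.ofReal (|u x| ^ p) ∂ν := by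
    rw [← lintegral_const_mul' _ _ ENNReal.ofReal_ne_top]
    refine lintegral_congr fun x => ?_
    rw [← ENNReal.ofReal_mul (mul_nonneg (Real.rpow_nonneg (by linarith) p) hAVR.le)]
    congr 1
    rw [Real.mul_rpow (by linarith) (abs_nonneg _)]
    ring
  -- relation of E and T
  have hET : ∀ n, 2 * (ν.prod ν) (T n) ≤ (ν.prod ν) (E n) := by
    intro n
    have hswap : (ν.prod ν) (Prod.swap ⁻¹' T n) = (ν.prod ν) (T n) := by
      rw [← Measure.map_apply measurable_swap (mT n), Measure.prod_swap]
    have hdisj : Disjoint (T n) (Prod.swap ⁻¹' T n) := by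
      rw [Set.disjoint_left]
      rintro q ⟨-, h1⟩ ⟨-, h2⟩
      simp only [Set.mem_setOf_eq, Prod.fst_swap, Prod.snd_swap] at h1 h2
      have := abs_nonneg (u q.1)
      have := abs_nonneg (u q.2)
      nlinarith
    have hsubE : T n ∪ Prod.swap ⁻¹' T n ⊆ E n := by
      refine Set.union_subset Set.inter_subset_left ?_
      intro q hq
      have h1 : q.swap ∈ T n := hq
      have h2 := h1.1
      simp only [hEdef, Set.mem_setOf_eq, Prod.fst_swap, Prod.snd_swap] at h2 ⊢
      rwa [dist_comm, abs_sub_comm] at h2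
    calc 2 * (ν.prod ν) (T n) = (ν.prod ν) (T n) + (ν.prod ν) (Prod.swap ⁻¹' T n) := by
          rw [hswap, two_mul]
      _ = (ν.prod ν) (T n ∪ Prod.swap ⁻¹' T n) :=
          (measure_union hdisj ((mT n).preimage measurable_swap)).symm
      _ ≤ (ν.prod ν) (E n) := measure_mono hsubE
  -- terms are below the sup
  have hterm : ∀ n, 2 * (ENNReal.ofReal (lam n ^ p) * (ν.prod ν) (T n)) ≤
      ⨆ l > (0:ℝ), ENNReal.ofReal (l ^ p) *
        (ν.prod ν) {q : X × X | l * dist q.1 q.2 ^ (s / p) ≤ |u q.1 - u q.2|} := by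
    intro n
    have h1 : 2 * (ENNReal.ofReal (lam n ^ p) * (ν.prod ν) (T n)) ≤
        ENNReal.ofReal (lam n ^ p) * (ν.prod ν) (E n) := by
      rw [show 2 * (ENNReal.ofReal (lam n ^ p) * (ν.prod ν) (T n)) =
        ENNReal.ofReal (lam n ^ p) * (2 * (ν.prod ν) (T n)) by ring]
      exact mul_le_mul_right (hET n) _
    refine h1.trans ?_
    exact le_iSup₂ (f := fun l (_ : l > (0:ℝ)) => ENNReal.ofReal (l ^ p) *
      (ν.prod ν) {q : X × X | l * dist q.1 q.2 ^ (s / p) ≤ |u q.1 - u q.2|})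
      (lam n) (hlampos n)
  -- liminf of 2 * f
  have h2liminf : 2 * atTop.liminf (fun n => ENNReal.ofReal (lam n ^ p) * (ν.prod ν) (T n)) ≤
      atTop.liminf fun n => 2 * (ENNReal.ofReal (lam n ^ p) * (ν.prod ν) (T n)) := by
    have := ENNReal.le_liminf_mul (f := atTop) (u := fun _ : ℕ => (2 : ENNReal))
      (v := fun n => ENNReal.ofReal (lam n ^ p) * (ν.prod ν) (T n))
    simpa [Filter.liminf_const, Pi.mul_def] using this
  have hfinal : atTop.liminf (fun n => 2 * (ENNReal.ofReal (lam n ^ p) * (ν.prod ν) (T n))) ≤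
      ⨆ l > (0:ℝ), ENNReal.ofReal (l ^ p) *
        (ν.prod ν) {q : X × X | l * dist q.1 q.2 ^ (s / p) ≤ |u q.1 - u q.2|} :=
    Filter.liminf_le_of_frequently_le' (Frequently.of_forall hterm)
  calc ENNReal.ofReal (2 * ((1 - θ) ^ p * AVR)) * ∫⁻ x, ENNReal.ofReal (|u x| ^ p) ∂ν
      = 2 * (ENNReal.ofReal ((1 - θ) ^ p * AVR) * ∫⁻ x, ENNReal.ofReal (|u x| ^ p) ∂ν) := by
        rw [ENNReal.ofReal_mul (by norm_num), mul_assoc]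
        norm_num
    _ ≤ 2 * atTop.liminf (fun n => ENNReal.ofReal (lam n ^ p) * (ν.prod ν) (T n)) := by
        rw [← hLHS]
        exact mul_le_mul_right fatou _
    _ ≤ atTop.liminf fun n => 2 * (ENNReal.ofReal (lam n ^ p) * (ν.prod ν) (T n)) := h2liminf
    _ ≤ _ := hfinal

theorem weak_MS_bounds_AVR
    {X : Type*} [MetricSpace X] [CompleteSpace X] [SecondCountableTopology X]
    [MeasurableSpace X] [BorelSpace X]
    (ν : Measure X) [SigmaFinite ν]
    (hX : ν Set.univ = ⊤)
    (s C_A : ℝ) (hs : 0 < s) (hCA : 0 < C_A)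
    (hreg : ∀ (x : X) (r : ℝ), 0 < r → ν (ball x r) ≤ ENNReal.ofReal (C_A * r ^ s))
    (hcont : ∀ x : X, Continuous fun r : ℝ => ν (ball x r))
    (AVR : ℝ) (hAVR : 0 < AVR)
    (hAVRlim : ∀ x₀ : X,
      Tendsto (fun r : ℝ => (ν (ball x₀ r)).toReal / r ^ s) atTop (𝓝 AVR))
    (p : ℝ) (hp : 1 ≤ p) (u : X → ℝ) (hu : MemLp u (ENNReal.ofReal p) ν) :
    ENNReal.ofReal (2 * AVR) * ∫⁻ x, ENNReal.ofReal (|u x| ^ p) ∂ν ≤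
      (⨆ lam > (0 : ℝ), ENNReal.ofReal (lam ^ p) *
        (ν.prod ν) {q : X × X | lam * dist q.1 q.2 ^ (s / p) ≤ |u q.1 - u q.2|}) ∧
    (⨆ lam > (0 : ℝ), ENNReal.ofReal (lam ^ p) *
        (ν.prod ν) {q : X × X | lam * dist q.1 q.2 ^ (s / p) ≤ |u q.1 - u q.2|}) ≤
      ENNReal.ofReal ((2 : ℝ) ^ (p + 1) * C_A) *
        ∫⁻ x, ENNReal.ofReal (|u x| ^ p) ∂ν := by
  -- replace u by a measurable representative
  set v : X → ℝ := hu.aestronglyMeasurable.mk u with hvdef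
  have hmv : Measurable v := hu.aestronglyMeasurable.stronglyMeasurable_mk.measurable
  have heq : u =ᵐ[ν] v := hu.aestronglyMeasurable.ae_eq_mk
  have huv : MemLp v (ENNReal.ofReal p) ν := hu.ae_eq heq
  have hI : ∫⁻ x, ENNReal.ofReal (|u x| ^ p) ∂ν = ∫⁻ x, ENNReal.ofReal (|v x| ^ p) ∂ν :=
    lintegral_congr_ae (heq.mono fun x hx => by simp only [hx])
  have hae : ∀ᵐ q ∂ν.prod ν, u q.1 = v q.1 ∧ u q.2 = v q.2 := by
    have hN : ν {x | u x ≠ v x} = 0 := heq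
    set N := toMeasurable ν {x | u x ≠ v x} with hNdef
    have hN' : ν N = 0 := by rw [hNdef, measure_toMeasurable]; exact hN
    rw [ae_iff]
    refine measure_mono_null (fun q hq => ?_)
      (show (ν.prod ν) ((N ×ˢ Set.univ) ∪ (Set.univ ×ˢ N)) = 0 from ?_)
    · simp only [Set.mem_setOf_eq, not_and_or] at hq
      rcases hq with h | h
      · exact Or.inl ⟨subset_toMeasurable ν _ h, Set.mem_univ _⟩
      · exact Or.inr ⟨Set.mem_univ _, subset_toMeasurable ν _ h⟩
    · refine measure_union_null ?_ ?_
      · rw [Measure.prod_prod, hN', zero_mul]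
      · rw [Measure.prod_prod, hN', mul_zero]
  have hSet : ∀ lam : ℝ,
      (ν.prod ν) {q : X × X | lam * dist q.1 q.2 ^ (s / p) ≤ |u q.1 - u q.2|} =
      (ν.prod ν) {q : X × X | lam * dist q.1 q.2 ^ (s / p) ≤ |v q.1 - v q.2|} := by
    intro lam
    refine measure_congr ?_
    filter_upwards [hae] with q hq
    show (lam * dist q.1 q.2 ^ (s / p) ≤ |u q.1 - u q.2|) =
      (lam * dist q.1 q.2 ^ (s / p) ≤ |v q.1 - v q.2|)
    rw [hq.1, hq.2]
  have hSup : (⨆ lam > (0 : ℝ), ENNReal.ofReal (lam ^ p) *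
        (ν.prod ν) {q : X × X | lam * dist q.1 q.2 ^ (s / p) ≤ |u q.1 - u q.2|}) =
      ⨆ lam > (0 : ℝ), ENNReal.ofReal (lam ^ p) *
        (ν.prod ν) {q : X × X | lam * dist q.1 q.2 ^ (s / p) ≤ |v q.1 - v q.2|} := by
    refine iSup_congr fun lam => iSup_congr fun _ => ?_
    rw [hSet lam]
  rw [hI, hSup]
  constructor
  · -- lower bound, via θ → 0
    set S := ⨆ lam > (0 : ℝ), ENNReal.ofReal (lam ^ p) *
        (ν.prod ν) {q : X × X | lam * dist q.1 q.2 ^ (s / p) ≤ |v q.1 - v q.2|} with hSdef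
    set I := ∫⁻ x, ENNReal.ofReal (|v x| ^ p) ∂ν with hIdef
    have hθpos : ∀ k : ℕ, (0:ℝ) < ((k : ℝ) + 2)⁻¹ := fun k => by positivity
    have hθlt : ∀ k : ℕ, ((k : ℝ) + 2)⁻¹ < 1 := fun k => by
      rw [inv_lt_one₀ (by positivity)]
      linarith [Nat.cast_nonneg (α := ℝ) k]
    have hle : ∀ k : ℕ,
        ENNReal.ofReal (2 * ((1 - ((k : ℝ) + 2)⁻¹) ^ p * AVR)) * I ≤ S := fun k =>
      msb_lower ν s C_A hs hCA hreg AVR hAVR hAVRlim p hp v hmv huv _ (hθpos k) (hθlt k)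
    have hθ0 : Tendsto (fun k : ℕ => ((k : ℝ) + 2)⁻¹) atTop (𝓝 0) :=
      tendsto_inv_atTop_zero.comp
        (tendsto_atTop_add_const_right atTop 2 tendsto_natCast_atTop_atTop)
    have ht1 : Tendsto (fun k : ℕ => 2 * ((1 - ((k : ℝ) + 2)⁻¹) ^ p * AVR)) atTop
        (𝓝 (2 * AVR)) := by
      have h1 : Tendsto (fun k : ℕ => 1 - ((k : ℝ) + 2)⁻¹) atTop (𝓝 1) := by
        simpa using (tendsto_const_nhds (x := (1:ℝ))).sub hθ0
      have h2 : Tendsto (fun k : ℕ => (1 - ((k : ℝ) + 2)⁻¹) ^ p) atTop (𝓝 1) := by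
        have := h1.rpow_const (p := p) (Or.inl one_ne_zero)
        simpa using this
      have h3 := (h2.mul_const AVR).const_mul (2:ℝ)
      simpa using h3
    have ht2 : Tendsto (fun k : ℕ =>
        ENNReal.ofReal (2 * ((1 - ((k : ℝ) + 2)⁻¹) ^ p * AVR)) * I) atTop
        (𝓝 (ENNReal.ofReal (2 * AVR) * I)) := by
      refine ENNReal.Tendsto.mul_const (ENNReal.tendsto_ofReal ht1) (Or.inl ?_)
      simp only [ne_eq, ENNReal.ofReal_eq_zero, not_le]
      positivity
    exact le_of_tendsto ht2 (Eventually.of_forall hle)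
  · refine iSup₂_le fun lam hlam => ?_
    exact msb_upper ν s C_A hs hCA hreg p hp v hmv lam hlam
end

section
/- Let (X,d,ν) be a metric measure space with ν(X) = +∞ and suppose ν is Ahlfors regular of dimension s: C_a r^s ≤ ν(B(x,r)) ≤ C_A r^s for all x ∈ X, r > 0. Then for all p ∈ [1,∞) and u ∈ L^p(X,ν): 2 C_a ‖u‖_{L^p}^p ≤ [ (u(x)-u(y))/d(x,y)^{s/p} ]^p_{L^p_w(X×X, ν⊗ν)} ≤ 2^{p+1} C_A ‖u‖_{L^p}^p. -/
open MeasureTheory Metric Filter Topology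
open scoped ENNReal NNReal
lemma closedBall_meas_le_aux {X : Type*} [MetricSpace X] [MeasurableSpace X]
    (ν : Measure X) (s C_A : ℝ) (hs : 0 < s)
    (hub : ∀ (x : X) (r : ℝ), 0 < r → ν (ball x r) ≤ ENNReal.ofReal (C_A * r ^ s))
    (x : X) (R : ℝ) (hR : 0 ≤ R) :
    ν (closedBall x R) ≤ ENNReal.ofReal (C_A * R ^ s) := by
  apply ENNReal.le_of_forall_pos_le_add
  intro ε hε _
  have hcont : ContinuousAt (fun t : ℝ => C_A * t ^ s) R :=
    continuousAt_const.mul (Real.continuousAt_rpow_const R s (Or.inr hs.le))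
  have hev : ∀ᶠ t in 𝓝[>] R, C_A * t ^ s < C_A * R ^ s + ε := by
    have h1 : Tendsto (fun t : ℝ => C_A * t ^ s) (𝓝[>] R) (𝓝 (C_A * R ^ s)) :=
      hcont.continuousWithinAt.tendsto
    exact h1 (Iio_mem_nhds (lt_add_of_pos_right _ (by exact_mod_cast hε)))
  obtain ⟨t, hlt, ht⟩ := (hev.and eventually_mem_nhdsWithin).exists
  have hRt : R < t := ht
  calc ν (closedBall x R) ≤ ν (ball x t) :=
        measure_mono (fun y hy => lt_of_le_of_lt hy hRt)
    _ ≤ ENNReal.ofReal (C_A * t ^ s) := hub x t (lt_of_le_of_lt hR hRt)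
    _ ≤ ENNReal.ofReal (C_A * R ^ s + ε) := ENNReal.ofReal_le_ofReal hlt.le
    _ ≤ ENNReal.ofReal (C_A * R ^ s) + ε := by
        calc ENNReal.ofReal (C_A * R ^ s + ↑ε) ≤ ENNReal.ofReal (C_A * R ^ s) + ENNReal.ofReal ↑ε := ENNReal.ofReal_add_le
          _ = ENNReal.ofReal (C_A * R ^ s) + ↑ε := by rw [ENNReal.ofReal_coe_nnreal]

lemma upper_aux {X : Type*} [MetricSpace X] [MeasurableSpace X] [BorelSpace X]
    [SecondCountableTopology X]
    (ν : Measure X) [SigmaFinite ν]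
    (s C_A : ℝ) (hs : 0 < s) (hCA : 0 < C_A)
    (hub : ∀ (x : X) (r : ℝ), 0 < r → ν (ball x r) ≤ ENNReal.ofReal (C_A * r ^ s))
    (p : ℝ) (hp : 1 ≤ p) (u : X → ℝ) (hm : Measurable u) :
    (⨆ lam > (0:ℝ), ENNReal.ofReal (lam ^ p) *
        (ν.prod ν) {q : X × X | lam * dist q.1 q.2 ^ (s / p) ≤ |u q.1 - u q.2|}) ≤
      ENNReal.ofReal ((2:ℝ) ^ (p + 1) * C_A) * ∫⁻ x, ENNReal.ofReal (|u x| ^ p) ∂ν := by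
  have hp0 : (0:ℝ) < p := lt_of_lt_of_le one_pos hp
  have hrpow_meas : Measurable fun t : ℝ => t ^ p :=
    (continuous_id.rpow_const (fun _ => Or.inr hp0.le)).measurable
  apply iSup₂_le
  intro lam hlam
  set A₁ : Set (X × X) := {q : X × X | lam * dist q.1 q.2 ^ (s / p) ≤ 2 * |u q.1|} with hA₁def
  set A₂ : Set (X × X) := {q : X × X | lam * dist q.1 q.2 ^ (s / p) ≤ 2 * |u q.2|} with hA₂def
  have hdmeas : Measurable fun q : X × X => lam * dist q.1 q.2 ^ (s / p) :=
    (measurable_const.mul ((continuous_dist.rpow_const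
      (fun _ => Or.inr (by positivity))).measurable))
  have hA₁ : MeasurableSet A₁ :=
    measurableSet_le hdmeas ((hm.comp measurable_fst).abs.const_mul 2)
  have hA₂ : MeasurableSet A₂ :=
    measurableSet_le hdmeas ((hm.comp measurable_snd).abs.const_mul 2)
  have hsub : {q : X × X | lam * dist q.1 q.2 ^ (s / p) ≤ |u q.1 - u q.2|} ⊆ A₁ ∪ A₂ := by
    intro q hq
    have hq' : lam * dist q.1 q.2 ^ (s / p) ≤ |u q.1 - u q.2| := hq
    have habs : |u q.1 - u q.2| ≤ |u q.1| + |u q.2| := abs_sub (u q.1) (u q.2)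
    rcases le_total (|u q.2|) (|u q.1|) with h | h
    · exact Or.inl (show lam * dist q.1 q.2 ^ (s / p) ≤ 2 * |u q.1| by linarith)
    · exact Or.inr (show lam * dist q.1 q.2 ^ (s / p) ≤ 2 * |u q.2| by linarith)
  have hswap : A₂ = Prod.swap ⁻¹' A₁ := by
    ext q
    simp only [hA₁def, hA₂def, Set.mem_setOf_eq, Set.mem_preimage, Prod.fst_swap, Prod.snd_swap]
    rw [dist_comm]
  have hμswap : (ν.prod ν) A₂ = (ν.prod ν) A₁ := by
    rw [hswap, ← Measure.map_apply measurable_swap hA₁, Measure.prod_swap]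
  -- fiber bound
  have hfiber : ∀ x : X, ν {y : X | lam * dist x y ^ (s / p) ≤ 2 * |u x|} ≤
      ENNReal.ofReal (C_A * ((2 * |u x| / lam) ^ p)) := by
    intro x
    set R : ℝ := (2 * |u x| / lam) ^ (p / s) with hRdef
    have hR : 0 ≤ R := Real.rpow_nonneg (by positivity) _
    have hsubset : {y : X | lam * dist x y ^ (s / p) ≤ 2 * |u x|} ⊆ closedBall x R := by
      intro y hy
      simp only [Set.mem_setOf_eq] at hy
      have h1 : dist x y ^ (s / p) ≤ 2 * |u x| / lam := by
        rw [le_div_iff₀ hlam]; linarith [mul_comm lam (dist x y ^ (s / p))]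
      have h2 : (dist x y ^ (s / p)) ^ (p / s) ≤ R :=
        Real.rpow_le_rpow (Real.rpow_nonneg dist_nonneg _) h1 (by positivity)
      have h3 : (dist x y ^ (s / p)) ^ (p / s) = dist x y := by
        rw [← Real.rpow_mul dist_nonneg]
        have h4 : s / p * (p / s) = 1 := by
          field_simp
        rw [h4, Real.rpow_one]
      rw [mem_closedBall, dist_comm]
      rw [h3] at h2
      exact h2
    calc ν {y : X | lam * dist x y ^ (s / p) ≤ 2 * |u x|} ≤ ν (closedBall x R) :=
          measure_mono hsubset
      _ ≤ ENNReal.ofReal (C_A * R ^ s) := closedBall_meas_le_aux ν s C_A hs hub x R hR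
      _ = ENNReal.ofReal (C_A * ((2 * |u x| / lam) ^ p)) := by
          congr 1
          rw [hRdef, ← Real.rpow_mul (by positivity), div_mul_cancel₀ _ (ne_of_gt hs)]
  have hfibint : (ν.prod ν) A₁ ≤ ∫⁻ x, ENNReal.ofReal (C_A * ((2 * |u x| / lam) ^ p)) ∂ν := by
    rw [Measure.prod_apply hA₁]
    exact lintegral_mono fun x => hfiber x
  have hmeas_int : Measurable fun x => ENNReal.ofReal (C_A * ((2 * |u x| / lam) ^ p)) :=
    ENNReal.measurable_ofReal.comp
      ((hrpow_meas.comp ((hm.abs.const_mul 2).div_const lam)).const_mul C_A)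
  have hmu : Measurable fun x : X => ENNReal.ofReal (|u x| ^ p) :=
    ENNReal.measurable_ofReal.comp (hrpow_meas.comp hm.abs)
  have hpoint : ∀ x : X, ENNReal.ofReal (lam ^ p) * ENNReal.ofReal (C_A * ((2 * |u x| / lam) ^ p))
      = ENNReal.ofReal (C_A * 2 ^ p) * ENNReal.ofReal (|u x| ^ p) := by
    intro x
    rw [← ENNReal.ofReal_mul (by positivity), ← ENNReal.ofReal_mul (by positivity)]
    congr 1
    rw [Real.div_rpow (by positivity) hlam.le, Real.mul_rpow (by norm_num) (abs_nonneg _)]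
    have hlp : (0:ℝ) < lam ^ p := Real.rpow_pos_of_pos hlam p
    field_simp
  calc ENNReal.ofReal (lam ^ p) *
        (ν.prod ν) {q : X × X | lam * dist q.1 q.2 ^ (s / p) ≤ |u q.1 - u q.2|}
      ≤ ENNReal.ofReal (lam ^ p) * ((ν.prod ν) A₁ + (ν.prod ν) A₂) :=
        mul_le_mul_right (le_trans (measure_mono hsub) (measure_union_le _ _)) _
    _ = 2 * (ENNReal.ofReal (lam ^ p) * (ν.prod ν) A₁) := by
        rw [hμswap, ← two_mul]; ring
    _ ≤ 2 * (ENNReal.ofReal (lam ^ p) *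
          ∫⁻ x, ENNReal.ofReal (C_A * ((2 * |u x| / lam) ^ p)) ∂ν) :=
        mul_le_mul_right (mul_le_mul_right hfibint _) _
    _ = 2 * ∫⁻ x, ENNReal.ofReal (lam ^ p) *
          ENNReal.ofReal (C_A * ((2 * |u x| / lam) ^ p)) ∂ν := by
        rw [lintegral_const_mul _ hmeas_int]
    _ = 2 * ∫⁻ x, ENNReal.ofReal (C_A * 2 ^ p) * ENNReal.ofReal (|u x| ^ p) ∂ν := by
        congr 1; exact lintegral_congr fun x => hpoint x
    _ = 2 * (ENNReal.ofReal (C_A * 2 ^ p) * ∫⁻ x, ENNReal.ofReal (|u x| ^ p) ∂ν) := by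
        rw [lintegral_const_mul _ hmu]
    _ = ENNReal.ofReal ((2:ℝ) ^ (p + 1) * C_A) * ∫⁻ x, ENNReal.ofReal (|u x| ^ p) ∂ν := by
        rw [← mul_assoc]
        congr 1
        rw [Real.rpow_add_one (by norm_num : (2:ℝ) ≠ 0) p,
          show (2:ℝ) ^ p * 2 * C_A = 2 * (C_A * 2 ^ p) by ring,
          ENNReal.ofReal_mul (by norm_num : (0:ℝ) ≤ 2), ENNReal.ofReal_ofNat]

lemma lower_aux {X : Type*} [MetricSpace X] [MeasurableSpace X] [BorelSpace X]
    [SecondCountableTopology X]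
    (ν : Measure X) [SigmaFinite ν]
    (s C_a : ℝ) (hs : 0 < s) (hCa : 0 < C_a)
    (hlb : ∀ (x : X) (r : ℝ), 0 < r → ENNReal.ofReal (C_a * r ^ s) ≤ ν (ball x r))
    (p : ℝ) (hp : 1 ≤ p) (u : X → ℝ) (hm : Measurable u)
    (hI : ∫⁻ x, ENNReal.ofReal (|u x| ^ p) ∂ν ≠ ⊤) :
    ENNReal.ofReal (2 * C_a) * ∫⁻ x, ENNReal.ofReal (|u x| ^ p) ∂ν ≤
      ⨆ lam > (0:ℝ), ENNReal.ofReal (lam ^ p) *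
        (ν.prod ν) {q : X × X | lam * dist q.1 q.2 ^ (s / p) ≤ |u q.1 - u q.2|} := by
  have hp0 : (0:ℝ) < p := lt_of_lt_of_le one_pos hp
  have hsp : (0:ℝ) < s / p := by positivity
  have hps : (0:ℝ) < p / s := by positivity
  set I := ∫⁻ x, ENNReal.ofReal (|u x| ^ p) ∂ν with hIdef
  set S := ⨆ lam > (0:ℝ), ENNReal.ofReal (lam ^ p) *
      (ν.prod ν) {q : X × X | lam * dist q.1 q.2 ^ (s / p) ≤ |u q.1 - u q.2|} with hSdef
  have hrpow_meas : Measurable fun t : ℝ => t ^ p :=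
    (continuous_id.rpow_const (fun _ => Or.inr hp0.le)).measurable
  have hrpow_meas2 : Measurable fun t : ℝ => t ^ (p / s) :=
    (continuous_id.rpow_const (fun _ => Or.inr hps.le)).measurable
  have hmu : Measurable fun x : X => ENNReal.ofReal (|u x| ^ p) :=
    ENNReal.measurable_ofReal.comp (hrpow_meas.comp hm.abs)
  -- the key estimate for fixed ε ∈ (0,1)
  have key : ∀ ε : ℝ, 0 < ε → ε < 1 →
      ENNReal.ofReal (2 * C_a * (1 - ε) ^ p) * I ≤ S := by
    intro ε hε hε1
    -- the "bad" measure
    set Bad : X → ℝ≥0∞ := fun x => ν {y | ε * |u x| < |u y|} with hBaddef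
    have hBadmeas : Measurable Bad := by
      have hg : Antitone (fun t : ℝ => ν {y | t < |u y|}) :=
        fun a b hab => measure_mono (fun y hy => lt_of_le_of_lt hab hy)
      exact hg.measurable.comp (hm.abs.const_mul ε)
    have hBadfin : ∀ x : X, u x ≠ 0 → Bad x ≠ ⊤ := by
      intro x hx
      have hux : 0 < |u x| := abs_pos.mpr hx
      have ht : (0:ℝ) < ε * |u x| := by positivity
      set c : ℝ≥0∞ := ENNReal.ofReal ((ε * |u x|) ^ p) with hcdef
      have hc0 : c ≠ 0 := by
        simp only [hcdef, ne_eq, ENNReal.ofReal_eq_zero, not_le]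
        positivity
      have h1 : Bad x ≤ ν {y | c ≤ ENNReal.ofReal (|u y| ^ p)} := by
        apply measure_mono
        intro y hy
        have : (ε * |u x|) ^ p ≤ |u y| ^ p :=
          Real.rpow_le_rpow ht.le (le_of_lt hy) hp0.le
        exact ENNReal.ofReal_le_ofReal this
      have h2 := mul_meas_ge_le_lintegral₀ (μ := ν) hmu.aemeasurable c
      have h3 : c * ν {y | c ≤ ENNReal.ofReal (|u y| ^ p)} ≠ ⊤ :=
        ne_top_of_le_ne_top hI h2
      have h4 : ν {y | c ≤ ENNReal.ofReal (|u y| ^ p)} ≠ ⊤ := by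
        intro htop
        rw [htop, ENNReal.mul_top hc0] at h3
        exact h3 rfl
      exact ne_top_of_le_ne_top h4 h1
    -- the sequence of lambdas
    have hlamn : ∀ n : ℕ, (0:ℝ) < 1 / (n + 1) := fun n => by positivity
    set c : ℕ → ℝ≥0∞ := fun n => ENNReal.ofReal ((1 / (n + 1) : ℝ) ^ p) with hcdef
    have hcanti : ∀ {n m : ℕ}, n ≤ m → c m ≤ c n := by
      intro n m hnm
      apply ENNReal.ofReal_le_ofReal
      apply Real.rpow_le_rpow (by positivity) _ hp0.le
      apply one_div_le_one_div_of_le (by positivity)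
      have : (n:ℝ) ≤ m := Nat.cast_le.mpr hnm
      linarith
    set K : X → ℝ≥0∞ := fun x => ENNReal.ofReal (C_a * ((1 - ε) * |u x|) ^ p) with hKdef
    have hKmeas : Measurable K :=
      ENNReal.measurable_ofReal.comp
        ((hrpow_meas.comp (hm.abs.const_mul (1 - ε))).const_mul C_a)
    have hKfin : ∀ x, K x ≠ ⊤ := fun x => ENNReal.ofReal_ne_top
    set F : ℕ → X → ℝ≥0∞ := fun n x => if u x = 0 then 0 else K x - c n * Bad x with hFdef
    have hFmeas : ∀ n, Measurable (F n) := by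
      intro n
      exact Measurable.ite (hm (measurableSet_singleton 0)) measurable_const
        (hKmeas.sub (hBadmeas.const_mul (c n)))
    have hFmono : Monotone F := by
      intro n m hnm x
      simp only [hFdef]
      split_ifs with hx
      · exact le_refl _
      · exact tsub_le_tsub_left (mul_le_mul_left (hcanti hnm) _) _
    have hFsup : ∀ x, (⨆ n, F n x) = (if u x = 0 then 0 else K x) := by
      intro x
      by_cases hx : u x = 0
      · simp [hFdef, hx]
      · simp only [hFdef, hx, if_false]
        apply iSup_eq_of_tendsto (fun n m hnm => by
          exact tsub_le_tsub_left (mul_le_mul_left (hcanti hnm) _) _)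
        have hc0 : Tendsto c atTop (𝓝 0) := by
          have h1 : Tendsto (fun n : ℕ => (1 / (n + 1) : ℝ)) atTop (𝓝 0) :=
            tendsto_one_div_add_atTop_nhds_zero_nat
          have h2 : Tendsto (fun t : ℝ => ENNReal.ofReal (t ^ p)) (𝓝 0) (𝓝 0) := by
            have ha := (Real.continuousAt_rpow_const 0 p (Or.inr hp0.le)).tendsto
            rw [Real.zero_rpow hp0.ne'] at ha
            have hb := (ENNReal.continuous_ofReal.tendsto 0).comp ha
            simpa [Function.comp_def] using hb
          have h3 := h2.comp h1
          simpa [hcdef, Function.comp_def] using h3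
        have hmul : Tendsto (fun n => c n * Bad x) atTop (𝓝 0) := by
          have := ENNReal.Tendsto.mul_const hc0
            (Or.inr (hBadfin x hx) : (0:ℝ≥0∞) ≠ 0 ∨ Bad x ≠ ⊤)
          simpa using this
        have := ENNReal.Tendsto.sub (tendsto_const_nhds : Tendsto (fun _ : ℕ => K x) atTop (𝓝 (K x)))
          hmul (Or.inl (hKfin x))
        simpa using this
    -- the good sets
    set A : ℕ → Set (X × X) := fun n => {q : X × X | u q.1 ≠ 0 ∧ |u q.2| ≤ ε * |u q.1| ∧
        dist q.1 q.2 < ((1 - ε) * |u q.1| / (1 / (n + 1))) ^ (p / s)} with hAdef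
    have hAmeas : ∀ n, MeasurableSet (A n) := by
      intro n
      apply MeasurableSet.inter
      · exact ((hm.comp measurable_fst) (measurableSet_singleton 0)).compl
      apply MeasurableSet.inter
      · exact measurableSet_le (hm.comp measurable_snd).abs
          ((hm.comp measurable_fst).abs.const_mul ε)
      · exact measurableSet_lt (continuous_dist.measurable)
          (hrpow_meas2.comp (((hm.comp measurable_fst).abs.const_mul (1 - ε)).div_const _))
    -- fiber estimate
    have hfiber : ∀ n, ∀ x : X, F n x ≤ c n * ν (Prod.mk x ⁻¹' A n) := by
      intro n x
      by_cases hx : u x = 0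
      · simp [hFdef, hx]
      · have hux : 0 < |u x| := abs_pos.mpr hx
        set R : ℝ := ((1 - ε) * |u x| / (1 / (n + 1))) ^ (p / s) with hRdef
        have hRpos : 0 < R := by
          apply Real.rpow_pos_of_pos
          have h1ε : (0:ℝ) < 1 - ε := by linarith
          positivity
        have hfib_eq : Prod.mk x ⁻¹' A n = {y | |u y| ≤ ε * |u x| ∧ dist x y < R} := by
          ext y
          simp only [hAdef, Set.mem_preimage, Set.mem_setOf_eq, hRdef]
          exact ⟨fun h => ⟨h.2.1, h.2.2⟩, fun h => ⟨hx, h.1, h.2⟩⟩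
        have hball : ball x R ⊆ (Prod.mk x ⁻¹' A n) ∪ {y | ε * |u x| < |u y|} := by
          intro y hy
          by_cases hcase : |u y| ≤ ε * |u x|
          · left
            rw [hfib_eq]
            exact ⟨hcase, mem_ball'.mp hy⟩
          · right
            exact lt_of_not_ge hcase
        have hball_meas : ENNReal.ofReal (C_a * R ^ s) ≤
            ν (Prod.mk x ⁻¹' A n) + Bad x := by
          calc ENNReal.ofReal (C_a * R ^ s) ≤ ν (ball x R) := hlb x R hRpos
            _ ≤ ν ((Prod.mk x ⁻¹' A n) ∪ {y | ε * |u x| < |u y|}) := measure_mono hball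
            _ ≤ ν (Prod.mk x ⁻¹' A n) + Bad x := measure_union_le _ _
        have hsub_le : ENNReal.ofReal (C_a * R ^ s) - Bad x ≤ ν (Prod.mk x ⁻¹' A n) :=
          tsub_le_iff_right.mpr hball_meas
        have hKc : K x = c n * ENNReal.ofReal (C_a * R ^ s) := by
          rw [hKdef, hcdef, hRdef]
          rw [← ENNReal.ofReal_mul (by positivity)]
          congr 1
          rw [← Real.rpow_mul (by
            have h1ε : (0:ℝ) < 1 - ε := by linarith
            positivity), div_mul_cancel₀ _ (ne_of_gt hs)]
          rw [Real.div_rpow (by nlinarith [abs_nonneg (u x)]) (hlamn n).le]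
          have hlp : (0:ℝ) < (1 / (n + 1) : ℝ) ^ p := Real.rpow_pos_of_pos (hlamn n) p
          field_simp
        calc F n x = K x - c n * Bad x := by simp [hFdef, hx]
          _ = c n * ENNReal.ofReal (C_a * R ^ s) - c n * Bad x := by rw [hKc]
          _ ≤ c n * (ENNReal.ofReal (C_a * R ^ s) - Bad x) := by
              rw [tsub_le_iff_right, ← mul_add]
              exact mul_le_mul_right le_tsub_add _
          _ ≤ c n * ν (Prod.mk x ⁻¹' A n) := mul_le_mul_right hsub_le _
    -- integral of F n bounded by c n * μ (A n)
    have hintF : ∀ n, ∫⁻ x, F n x ∂ν ≤ c n * (ν.prod ν) (A n) := by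
      intro n
      calc ∫⁻ x, F n x ∂ν ≤ ∫⁻ x, c n * ν (Prod.mk x ⁻¹' A n) ∂ν :=
            lintegral_mono (hfiber n)
        _ = c n * ∫⁻ x, ν (Prod.mk x ⁻¹' A n) ∂ν :=
            lintegral_const_mul _ (measurable_measure_prodMk_left (hAmeas n))
        _ = c n * (ν.prod ν) (A n) := by rw [Measure.prod_apply (hAmeas n)]
    -- A n is inside E (lam n), together with its swap
    have hAsubE : ∀ n, A n ⊆ {q : X × X | (1 / (n + 1) : ℝ) * dist q.1 q.2 ^ (s / p) ≤
        |u q.1 - u q.2|} := by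
      intro n q hq
      obtain ⟨hq1, hq2, hq3⟩ := hq
      have hux : 0 < |u q.1| := abs_pos.mpr hq1
      have h1ε : (0:ℝ) < 1 - ε := by linarith
      have hRpos : (0:ℝ) < (1 - ε) * |u q.1| / (1 / (n + 1)) := by positivity
      have h1 : dist q.1 q.2 ^ (s / p) ≤
          (((1 - ε) * |u q.1| / (1 / (n + 1))) ^ (p / s)) ^ (s / p) :=
        Real.rpow_le_rpow dist_nonneg hq3.le hsp.le
      have h2 : (((1 - ε) * |u q.1| / (1 / (n + 1))) ^ (p / s)) ^ (s / p) =
          (1 - ε) * |u q.1| / (1 / (n + 1)) := by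
        rw [← Real.rpow_mul hRpos.le]
        have h4 : p / s * (s / p) = 1 := by field_simp
        rw [h4, Real.rpow_one]
      have h3 : (1 / (n + 1) : ℝ) * dist q.1 q.2 ^ (s / p) ≤ (1 - ε) * |u q.1| := by
        rw [← mul_div_cancel₀ ((1 - ε) * |u q.1|) (ne_of_gt (hlamn n))]
        exact mul_le_mul_of_nonneg_left (h2 ▸ h1) (hlamn n).le
      have h5 : (1 - ε) * |u q.1| ≤ |u q.1 - u q.2| := by
        have := abs_sub_abs_le_abs_sub (u q.1) (u q.2)
        nlinarith
      exact le_trans h3 h5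
    -- swap set
    have hswap_meas : ∀ n, MeasurableSet (Prod.swap ⁻¹' A n) :=
      fun n => (hAmeas n).preimage measurable_swap
    have hswap_measure : ∀ n, (ν.prod ν) (Prod.swap ⁻¹' A n) = (ν.prod ν) (A n) := by
      intro n
      rw [← Measure.map_apply measurable_swap (hAmeas n), Measure.prod_swap]
    have hswapsubE : ∀ n, Prod.swap ⁻¹' A n ⊆
        {q : X × X | (1 / (n + 1) : ℝ) * dist q.1 q.2 ^ (s / p) ≤ |u q.1 - u q.2|} := by
      intro n q hq
      have := hAsubE n hq
      simp only [Set.mem_setOf_eq, Prod.fst_swap, Prod.snd_swap] at this ⊢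
      rwa [dist_comm, abs_sub_comm] at this
    have hdisj : ∀ n, Disjoint (A n) (Prod.swap ⁻¹' A n) := by
      intro n
      rw [Set.disjoint_left]
      intro q hqA hqA'
      obtain ⟨h1, h2, _⟩ := hqA
      obtain ⟨h1', h2', _⟩ := hqA'
      simp only [Prod.fst_swap, Prod.snd_swap] at h1' h2'
      have hq2 : 0 < |u q.2| := abs_pos.mpr h1'
      have ha : ε * |u q.1| ≤ ε * (ε * |u q.2|) := mul_le_mul_of_nonneg_left h2' hε.le
      have hee : ε * ε < 1 := by nlinarith
      nlinarith [mul_lt_mul_of_pos_right hee hq2]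
    have hdouble : ∀ n, 2 * (ν.prod ν) (A n) ≤
        (ν.prod ν) {q : X × X | (1 / (n + 1) : ℝ) * dist q.1 q.2 ^ (s / p) ≤
          |u q.1 - u q.2|} := by
      intro n
      have := measure_union (μ := ν.prod ν) (hdisj n) (hswap_meas n)
      calc 2 * (ν.prod ν) (A n) = (ν.prod ν) (A n) + (ν.prod ν) (Prod.swap ⁻¹' A n) := by
            rw [hswap_measure n, two_mul]
        _ = (ν.prod ν) (A n ∪ Prod.swap ⁻¹' A n) := (this).symm
        _ ≤ _ := measure_mono (Set.union_subset (hAsubE n) (hswapsubE n))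
    -- each term is below S
    have hterm : ∀ n, 2 * ∫⁻ x, F n x ∂ν ≤ S := by
      intro n
      calc 2 * ∫⁻ x, F n x ∂ν ≤ 2 * (c n * (ν.prod ν) (A n)) :=
            mul_le_mul_right (hintF n) _
        _ = c n * (2 * (ν.prod ν) (A n)) := by ring
        _ ≤ c n * (ν.prod ν) {q : X × X | (1 / (n + 1) : ℝ) * dist q.1 q.2 ^ (s / p) ≤
            |u q.1 - u q.2|} := mul_le_mul_right (hdouble n) _
        _ ≤ S := by
            rw [hSdef]
            exact le_iSup₂_of_le (1 / (n + 1) : ℝ) (hlamn n) (le_refl _)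
    -- monotone convergence
    have hsup_int : ∫⁻ x, (if u x = 0 then 0 else K x) ∂ν = ⨆ n, ∫⁻ x, F n x ∂ν := by
      rw [← lintegral_iSup hFmeas hFmono]
      exact lintegral_congr fun x => (hFsup x).symm
    have hKint : ∫⁻ x, (if u x = 0 then 0 else K x) ∂ν =
        ENNReal.ofReal (C_a * (1 - ε) ^ p) * I := by
      have heq : ∀ x, (if u x = 0 then 0 else K x) =
          ENNReal.ofReal (C_a * (1 - ε) ^ p) * ENNReal.ofReal (|u x| ^ p) := by
        intro x
        by_cases hx : u x = 0
        · simp [hx, hKdef, abs_zero, Real.zero_rpow hp0.ne', mul_zero]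
        · simp only [hx, if_false, hKdef]
          rw [← ENNReal.ofReal_mul (by
            have h1ε : (0:ℝ) < 1 - ε := by linarith
            positivity)]
          congr 1
          rw [Real.mul_rpow (by linarith) (abs_nonneg _)]
          ring
      rw [lintegral_congr heq, lintegral_const_mul _ hmu, hIdef]
    have hfinal : ENNReal.ofReal (2 * C_a * (1 - ε) ^ p) * I =
        2 * ∫⁻ x, (if u x = 0 then 0 else K x) ∂ν := by
      rw [hKint, ← mul_assoc]
      congr 1
      rw [show 2 * C_a * (1 - ε) ^ p = 2 * (C_a * (1 - ε) ^ p) by ring,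
        ENNReal.ofReal_mul (by norm_num : (0:ℝ) ≤ 2), ENNReal.ofReal_ofNat]
    rw [hfinal, hsup_int, ENNReal.mul_iSup]
    exact iSup_le hterm
  -- pass to the limit ε → 0
  have hseq : ∀ m : ℕ, (0:ℝ) < 1 / (m + 2) ∧ (1 / (m + 2) : ℝ) < 1 := by
    intro m
    constructor
    · positivity
    · rw [div_lt_one (by positivity)]
      have : (0:ℝ) ≤ m := Nat.cast_nonneg m
      linarith
  have hlim : Tendsto (fun m : ℕ => ENNReal.ofReal (2 * C_a * (1 - 1 / (m + 2)) ^ p) * I)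
      atTop (𝓝 (ENNReal.ofReal (2 * C_a) * I)) := by
    have h1 : Tendsto (fun m : ℕ => (1 / (m + 2) : ℝ)) atTop (𝓝 0) := by
      have := (tendsto_one_div_add_atTop_nhds_zero_nat (𝕜 := ℝ)).comp (tendsto_add_atTop_nat 1)
      convert this using 2 with m
      simp only [Function.comp_apply]
      push_cast
      ring
    have h2 : Tendsto (fun m : ℕ => (1 - 1 / (m + 2) : ℝ)) atTop (𝓝 1) := by
      have := (tendsto_const_nhds (x := (1:ℝ)) (f := atTop)).sub h1
      simpa using this
    have h3 : Tendsto (fun m : ℕ => ((1 - 1 / (m + 2) : ℝ)) ^ p) atTop (𝓝 1) := by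
      have hcont := (Real.continuousAt_rpow_const 1 p (Or.inl one_ne_zero)).tendsto
      have := hcont.comp h2
      simpa [Real.one_rpow, Function.comp_def] using this
    have h4 : Tendsto (fun m : ℕ => 2 * C_a * ((1 - 1 / (m + 2) : ℝ)) ^ p) atTop
        (𝓝 (2 * C_a)) := by
      have := h3.const_mul (2 * C_a)
      simpa using this
    have h5 := (ENNReal.continuous_ofReal.tendsto (2 * C_a)).comp h4
    have h6 := ENNReal.Tendsto.mul_const h5 (Or.inr hI :
      ENNReal.ofReal (2 * C_a) ≠ 0 ∨ I ≠ ⊤)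
    simpa [Function.comp_def] using h6
  apply le_of_tendsto hlim
  apply Eventually.of_forall
  intro m
  exact key (1 / (m + 2)) (hseq m).1 (hseq m).2

theorem weak_MS_bounds_Ahlfors
    {X : Type*} [MetricSpace X] [CompleteSpace X] [SecondCountableTopology X]
    [MeasurableSpace X] [BorelSpace X]
    (ν : Measure X) [SigmaFinite ν]
    (hX : ν Set.univ = ⊤)
    (s C_a C_A : ℝ) (hs : 0 < s) (hCa : 0 < C_a) (hCA : 0 < C_A)
    (hreg : ∀ (x : X) (r : ℝ), 0 < r →
      ENNReal.ofReal (C_a * r ^ s) ≤ ν (ball x r) ∧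
        ν (ball x r) ≤ ENNReal.ofReal (C_A * r ^ s))
    (p : ℝ) (hp : 1 ≤ p) (u : X → ℝ) (hu : MemLp u (ENNReal.ofReal p) ν) :
    ENNReal.ofReal (2 * C_a) * ∫⁻ x, ENNReal.ofReal (|u x| ^ p) ∂ν ≤
      (⨆ lam > (0 : ℝ), ENNReal.ofReal (lam ^ p) *
        (ν.prod ν) {q : X × X | lam * dist q.1 q.2 ^ (s / p) ≤ |u q.1 - u q.2|}) ∧
    (⨆ lam > (0 : ℝ), ENNReal.ofReal (lam ^ p) *
        (ν.prod ν) {q : X × X | lam * dist q.1 q.2 ^ (s / p) ≤ |u q.1 - u q.2|}) ≤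
      ENNReal.ofReal ((2 : ℝ) ^ (p + 1) * C_A) *
        ∫⁻ x, ENNReal.ofReal (|u x| ^ p) ∂ν := by
  have hp0 : (0:ℝ) < p := lt_of_lt_of_le one_pos hp
  have hlb : ∀ (x : X) (r : ℝ), 0 < r → ENNReal.ofReal (C_a * r ^ s) ≤ ν (ball x r) :=
    fun x r hr => (hreg x r hr).1
  have hub : ∀ (x : X) (r : ℝ), 0 < r → ν (ball x r) ≤ ENNReal.ofReal (C_A * r ^ s) :=
    fun x r hr => (hreg x r hr).2
  -- measurable representative
  obtain ⟨v, hvsm, huv⟩ := hu.1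
  have hvmeas : Measurable v := hvsm.measurable
  -- the integrals agree
  have hIeq : ∫⁻ x, ENNReal.ofReal (|u x| ^ p) ∂ν = ∫⁻ x, ENNReal.ofReal (|v x| ^ p) ∂ν :=
    lintegral_congr_ae (huv.mono fun x hx => by simp only [hx])
  -- finiteness of the integral
  have hpe : (ENNReal.ofReal p) ≠ 0 := by
    simp only [ne_eq, ENNReal.ofReal_eq_zero, not_le]
    exact hp0
  have hint := hu.integrable_norm_rpow hpe ENNReal.ofReal_ne_top
  rw [ENNReal.toReal_ofReal hp0.le] at hint
  have hfin : ∫⁻ x, ENNReal.ofReal (|u x| ^ p) ∂ν ≠ ⊤ := by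
    have h2 : ∫⁻ x, ‖(‖u x‖ ^ p)‖ₑ ∂ν < ⊤ := hint.2
    have h3 : ∫⁻ x, ENNReal.ofReal (|u x| ^ p) ∂ν = ∫⁻ x, ‖(‖u x‖ ^ p)‖ₑ ∂ν := by
      apply lintegral_congr
      intro x
      rw [Real.norm_eq_abs, Real.enorm_eq_ofReal (by positivity)]
    rw [h3]
    exact h2.ne
  have hfinv : ∫⁻ x, ENNReal.ofReal (|v x| ^ p) ∂ν ≠ ⊤ := hIeq ▸ hfin
  -- the product measures agree
  have hprod : ∀ lam : ℝ,
      (ν.prod ν) {q : X × X | lam * dist q.1 q.2 ^ (s / p) ≤ |u q.1 - u q.2|}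
        = (ν.prod ν) {q : X × X | lam * dist q.1 q.2 ^ (s / p) ≤ |v q.1 - v q.2|} := by
    intro lam
    apply measure_congr
    set N := {x : X | ¬ u x = v x} with hNdef
    have hN : ν N = 0 := ae_iff.mp huv
    have hnull : (ν.prod ν) ((N ×ˢ (Set.univ : Set X)) ∪ ((Set.univ : Set X) ×ˢ N)) = 0 := by
      apply le_antisymm _ zero_le
      refine le_trans (measure_union_le _ _) ?_
      rw [Measure.prod_prod, Measure.prod_prod, hN, zero_mul, mul_zero, add_zero]
    have hincl : ∀ q : X × X,
        ((lam * dist q.1 q.2 ^ (s / p) ≤ |u q.1 - u q.2|) ≠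
          (lam * dist q.1 q.2 ^ (s / p) ≤ |v q.1 - v q.2|)) →
        q ∈ (N ×ˢ (Set.univ : Set X)) ∪ ((Set.univ : Set X) ×ˢ N) := by
      intro q hq
      by_cases h1 : u q.1 = v q.1
      · by_cases h2 : u q.2 = v q.2
        · exact absurd (by rw [h1, h2]) hq
        · exact Or.inr ⟨Set.mem_univ _, h2⟩
      · exact Or.inl ⟨h1, Set.mem_univ _⟩
    rw [ae_eq_set]
    constructor
    · apply measure_mono_null _ hnull
      intro q hq
      apply hincl
      intro heq
      exact hq.2 (cast heq hq.1)
    · apply measure_mono_null _ hnull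
      intro q hq
      apply hincl
      intro heq
      exact hq.2 (cast heq.symm hq.1)
  have hSeq : (⨆ lam > (0 : ℝ), ENNReal.ofReal (lam ^ p) *
        (ν.prod ν) {q : X × X | lam * dist q.1 q.2 ^ (s / p) ≤ |u q.1 - u q.2|})
      = ⨆ lam > (0 : ℝ), ENNReal.ofReal (lam ^ p) *
        (ν.prod ν) {q : X × X | lam * dist q.1 q.2 ^ (s / p) ≤ |v q.1 - v q.2|} :=
    iSup_congr fun lam => iSup_congr fun _ => by rw [hprod lam]
  rw [hIeq, hSeq]
  exact ⟨lower_aux ν s C_a hs hCa hlb p hp v hvmeas hfinv,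
    upper_aux ν s C_A hs hCA hub p hp v hvmeas⟩
end

section
/- Let (X,d,ν) be a metric measure space with ν(X) = +∞, ν Ahlfors regular of dimension s with equal constants C_a = C_A = C (i.e., ν(B(x,r)) = C r^s for all x, r). Then for all p ∈ [1,∞) and u ∈ L^p(X,ν), lim_{λ→0⁺} λ^p (ν⊗ν)(E_λ) = 2C ‖u‖_{L^p(X,ν)}^p, where E_λ = {(x,y) : |u(x)-u(y)| ≥ λ d(x,y)^{s/p}}. -/
open MeasureTheory Metric Filter Topology
open scoped ENNReal NNReal

lemma wms_ev_le_add {α : Type*} {l : Filter α} {f : α → ℝ≥0∞} {x ε : ℝ≥0∞}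
    (hx : x ≠ ⊤) (hε : 0 < ε) (hf : Tendsto f l (𝓝 x)) :
    ∀ᶠ n in l, x ≤ f n + ε := by
  have h : ∀ᶠ n in l, x - ε ≤ f n := by
    rcases eq_or_ne x 0 with h0 | h0
    · simp [h0]
    · exact hf (mem_of_superset (Ioi_mem_nhds (ENNReal.sub_lt_self hx h0 hε.ne'))
        Set.Ioi_subset_Ici_self)
  exact h.mono fun n hn => tsub_le_iff_right.1 hn

lemma wms_ev_le_add' {α : Type*} {l : Filter α} {f : α → ℝ≥0∞} {x ε : ℝ≥0∞}
    (hx : x ≠ ⊤) (hε : 0 < ε) (hf : Tendsto f l (𝓝 x)) :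
    ∀ᶠ n in l, f n ≤ x + ε :=
  hf (mem_of_superset (Iio_mem_nhds (ENNReal.lt_add_right hx hε.ne')) Set.Iio_subset_Iic_self)

section Aux
set_option linter.unusedSectionVars false
set_option linter.unusedVariables false
variable {X : Type*} [MetricSpace X] [SecondCountableTopology X]
  [MeasurableSpace X] [BorelSpace X]

lemma wms_closedBall_meas (ν : Measure X) {s C : ℝ} (hs : 0 < s) (hC : 0 < C)
    (hreg : ∀ (x : X) (r : ℝ), 0 < r → ν (ball x r) = ENNReal.ofReal (C * r ^ s))
    (x : X) {R : ℝ} (hR : 0 ≤ R) :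
    ν (closedBall x R) = ENNReal.ofReal (C * R ^ s) := by
  refine le_antisymm ?_ ?_
  · have h1 : ∀ᶠ r in 𝓝[>] R, ν (closedBall x R) ≤ ENNReal.ofReal (C * r ^ s) := by
      filter_upwards [self_mem_nhdsWithin] with r hr
      rw [← hreg x r (hR.trans_lt hr)]
      exact measure_mono (closedBall_subset_ball hr)
    have hc : ContinuousAt (fun r : ℝ => C * r ^ s) R :=
      ((Real.continuousAt_rpow_const R s (Or.inr hs.le)).const_mul C)
    have h2 : Tendsto (fun r : ℝ => ENNReal.ofReal (C * r ^ s)) (𝓝[>] R)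
        (𝓝 (ENNReal.ofReal (C * R ^ s))) :=
      ((ENNReal.continuous_ofReal.continuousAt.comp hc).tendsto).mono_left nhdsWithin_le_nhds
    exact ge_of_tendsto h2 h1
  · rcases hR.eq_or_lt with h | h
    · simp [← h, Real.zero_rpow hs.ne']
    · rw [← hreg x R h]; exact measure_mono ball_subset_closedBall

lemma wms_slice_eq {s p : ℝ} (hs : 0 < s) (hp : 0 < p) {t c : ℝ} (ht : 0 < t) (hc : 0 ≤ c)
    (x : X) :
    {y : X | t * dist x y ^ (s / p) ≤ c} = closedBall x ((c / t) ^ (p / s)) := by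
  ext y
  simp only [Set.mem_setOf_eq, mem_closedBall]
  rw [dist_comm y x, ← le_div_iff₀' ht, show p / s = (s / p)⁻¹ by rw [inv_div],
    Real.le_rpow_inv_iff_of_pos dist_nonneg (by positivity) (by positivity)]


lemma wms_cheb {ν : Measure X} {p : ℝ} (hp0 : 0 < p) {v : X → ℝ} (hv : Measurable v)
    {t : ℝ} (ht : 0 < t) :
    ν {x | t ≤ |v x|} ≤ (∫⁻ x, ENNReal.ofReal (|v x| ^ p) ∂ν) / ENNReal.ofReal (t ^ p) := by
  have hset : {x | t ≤ |v x|}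
      = {x | ENNReal.ofReal (t ^ p) ≤ ENNReal.ofReal (|v x| ^ p)} := by
    ext x
    simp only [Set.mem_setOf_eq]
    rw [ENNReal.ofReal_le_ofReal_iff (by positivity),
      Real.rpow_le_rpow_iff ht.le (abs_nonneg _) hp0]
  rw [hset]
  exact meas_ge_le_lintegral_div ((hv.abs.pow measurable_const).ennreal_ofReal).aemeasurable
    (by simp only [ne_eq, ENNReal.ofReal_eq_zero, not_le]; positivity) ENNReal.ofReal_ne_top


lemma wms_key {ν : Measure X} [SigmaFinite ν] {s C : ℝ} (hs : 0 < s) (hC : 0 < C)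
    (hreg : ∀ (x : X) (r : ℝ), 0 < r → ν (ball x r) = ENNReal.ofReal (C * r ^ s))
    {p : ℝ} (hp : 1 ≤ p) {v : X → ℝ} (hv : Measurable v)
    (hI : (∫⁻ x, ENNReal.ofReal (|v x| ^ p) ∂ν) ≠ ⊤)
    {ε : ℝ≥0∞} (hε : 0 < ε) :
    ∀ᶠ t in 𝓝[>] (0 : ℝ), ENNReal.ofReal (t ^ p) *
      (ν.prod ν) {q : X × X | t * dist q.1 q.2 ^ (s / p) ≤ |v q.1| ∧
        t * dist q.1 q.2 ^ (s / p) ≤ |v q.2|} ≤ ε := by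
  have hp0 : 0 < p := lt_of_lt_of_le one_pos hp
  set I := ∫⁻ x, ENNReal.ofReal (|v x| ^ p) ∂ν with hIdef
  set K : ℝ≥0∞ := ENNReal.ofReal C + I with hKdef
  have hKne : K ≠ ⊤ := by
    simp only [hKdef, ne_eq, ENNReal.add_eq_top, ENNReal.ofReal_ne_top, false_or]
    exact hI
  set G : ℝ → Set (X × X) := fun t =>
    {q : X × X | t * dist q.1 q.2 ^ (s / p) ≤ |v q.1| ∧
        t * dist q.1 q.2 ^ (s / p) ≤ |v q.2|} with hGdef
  have hdm : Measurable fun q : X × X => dist q.1 q.2 ^ (s / p) :=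
    continuous_dist.measurable.pow measurable_const
  have hGm : ∀ t, MeasurableSet (G t) := fun t => by
    apply MeasurableSet.inter
    · exact measurableSet_le (measurable_const.mul hdm) (hv.comp measurable_fst).abs
    · exact measurableSet_le (measurable_const.mul hdm) (hv.comp measurable_snd).abs
  set J : ℝ → ℝ≥0∞ := fun t =>
    ∫⁻ x, min (ENNReal.ofReal (C * |v x| ^ p)) (K * ENNReal.ofReal (t ^ (p / 2))) ∂ν
    with hJdef
  -- Step 1 : main slice estimate
  have step1 : ∀ t : ℝ, 0 < t → ENNReal.ofReal (t ^ p) * (ν.prod ν) (G t) ≤ J t := by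
    intro t ht
    rw [Measure.prod_apply (hGm t), ← lintegral_const_mul _
      (measurable_measure_prodMk_left (hGm t))]
    refine lintegral_mono fun x => ?_
    have hpre : Prod.mk x ⁻¹' G t
        = {y | t * dist x y ^ (s / p) ≤ |v x|} ∩ {y | t * dist x y ^ (s / p) ≤ |v y|} := rfl
    refine le_min ?_ ?_
    · -- first bound : C |v x|^p
      have h1 : ν (Prod.mk x ⁻¹' G t) ≤ ENNReal.ofReal (C * (|v x| / t) ^ p) := by
        calc ν (Prod.mk x ⁻¹' G t) ≤ ν {y | t * dist x y ^ (s / p) ≤ |v x|} := by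
              rw [hpre]; exact measure_mono Set.inter_subset_left
        _ = ν (closedBall x ((|v x| / t) ^ (p / s))) := by
              rw [wms_slice_eq hs hp0 ht (abs_nonneg _)]
        _ = ENNReal.ofReal (C * ((|v x| / t) ^ (p / s)) ^ s) :=
              wms_closedBall_meas ν hs hC hreg x (by positivity)
        _ = ENNReal.ofReal (C * (|v x| / t) ^ p) := by
              rw [← Real.rpow_mul (by positivity), div_mul_cancel₀ _ hs.ne']
      calc ENNReal.ofReal (t ^ p) * ν (Prod.mk x ⁻¹' G t)
          ≤ ENNReal.ofReal (t ^ p) * ENNReal.ofReal (C * (|v x| / t) ^ p) :=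
            mul_le_mul_right h1 _
        _ = ENNReal.ofReal (C * |v x| ^ p) := by
            rw [← ENNReal.ofReal_mul (by positivity)]
            congr 1
            rw [Real.div_rpow (abs_nonneg _) ht.le]
            field_simp
    · -- second bound
      set ρ : ℝ := t ^ (-(p / (2 * s))) with hρdef
      have hρ : 0 < ρ := Real.rpow_pos_of_pos ht _
      have hρs : ρ ^ s = t ^ (-(p / 2)) := by
        rw [hρdef, ← Real.rpow_mul ht.le]
        congr 1
        field_simp
      have hincl : Prod.mk x ⁻¹' G t ⊆
          closedBall x ρ ∪ {y | t * ρ ^ (s / p) ≤ |v y|} := by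
        rw [hpre]
        rintro y ⟨hy1, hy2⟩
        by_cases hd : dist y x ≤ ρ
        · exact Or.inl hd
        · refine Or.inr ?_
          have hy2' : t * dist x y ^ (s / p) ≤ |v y| := hy2
          refine le_trans ?_ hy2'
          have : ρ ≤ dist x y := by rw [dist_comm]; exact (not_le.1 hd).le
          exact mul_le_mul_of_nonneg_left
            (Real.rpow_le_rpow hρ.le this (by positivity)) ht.le
      have htρ : 0 < t * ρ ^ (s / p) := by positivity
      have h2 : ν (Prod.mk x ⁻¹' G t) ≤ K * ENNReal.ofReal (t ^ (-(p / 2))) := by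
        calc ν (Prod.mk x ⁻¹' G t)
            ≤ ν (closedBall x ρ) + ν {y | t * ρ ^ (s / p) ≤ |v y|} :=
              le_trans (measure_mono hincl) (measure_union_le _ _)
          _ ≤ ENNReal.ofReal (C * ρ ^ s) + I / ENNReal.ofReal ((t * ρ ^ (s / p)) ^ p) := by
              gcongr
              · exact le_of_eq (wms_closedBall_meas ν hs hC hreg x hρ.le)
              · exact wms_cheb hp0 hv htρ
          _ = K * ENNReal.ofReal (t ^ (-(p / 2))) := by
              have e1 : (t * ρ ^ (s / p)) ^ p = t ^ p * t ^ (-(p / 2)) := by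
                rw [Real.mul_rpow ht.le (by positivity), ← Real.rpow_mul hρ.le,
                  div_mul_cancel₀ _ hp0.ne', hρs]
              have e2 : t ^ p * t ^ (-(p / 2)) = t ^ (p / 2) := by
                rw [← Real.rpow_add ht]; congr 1; ring
              rw [e1, e2, hρs]
              rw [ENNReal.ofReal_mul hC.le]
              have e3 : ENNReal.ofReal (t ^ (-(p / 2)))
                  = (ENNReal.ofReal (t ^ (p / 2)))⁻¹ := by
                rw [Real.rpow_neg ht.le, ENNReal.ofReal_inv_of_pos (by positivity)]
              rw [e3, ENNReal.div_eq_inv_mul, hKdef, add_mul]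
              ring
      calc ENNReal.ofReal (t ^ p) * ν (Prod.mk x ⁻¹' G t)
          ≤ ENNReal.ofReal (t ^ p) * (K * ENNReal.ofReal (t ^ (-(p / 2)))) :=
            mul_le_mul_right h2 _
        _ = K * (ENNReal.ofReal (t ^ p) * ENNReal.ofReal (t ^ (-(p / 2)))) := by ring
        _ = K * ENNReal.ofReal (t ^ (p / 2)) := by
            rw [← ENNReal.ofReal_mul (by positivity), ← Real.rpow_add ht]
            congr 2
            ring
  -- Step 2 : monotonicity of J
  have step2 : ∀ t₁ t₂ : ℝ, 0 ≤ t₁ → t₁ ≤ t₂ → J t₁ ≤ J t₂ := by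
    intro t₁ t₂ h1 h12
    refine lintegral_mono fun x => ?_
    exact min_le_min le_rfl (mul_le_mul_right
      (ENNReal.ofReal_le_ofReal (Real.rpow_le_rpow h1 h12 (by positivity))) K)
  -- Step 3 : J (1/(n+1)) → 0
  have step3 : Tendsto (fun n : ℕ => J (1 / (n + 1 : ℝ))) atTop (𝓝 0) := by
    have h0 : (0 : ℝ≥0∞) = ∫⁻ _, (0 : ℝ≥0∞) ∂ν := by simp
    rw [h0]
    refine tendsto_lintegral_of_dominated_convergence
      (fun x => ENNReal.ofReal C * ENNReal.ofReal (|v x| ^ p)) ?_ ?_ ?_ ?_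
    · intro n
      exact (((hv.abs.pow measurable_const).const_mul C).ennreal_ofReal).min measurable_const
    · intro n
      refine Filter.Eventually.of_forall fun x => ?_
      exact le_trans (min_le_left _ _) (le_of_eq (ENNReal.ofReal_mul hC.le))
    · rw [lintegral_const_mul _ ((hv.abs.pow measurable_const).ennreal_ofReal)]
      exact ENNReal.mul_ne_top ENNReal.ofReal_ne_top hI
    · refine Filter.Eventually.of_forall fun x => ?_
      have h1 : Tendsto (fun n : ℕ => K * ENNReal.ofReal ((1 / (n + 1 : ℝ)) ^ (p / 2)))
          atTop (𝓝 0) := by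
        have ha : Tendsto (fun n : ℕ => (1 / (n + 1 : ℝ))) atTop (𝓝 0) :=
          tendsto_one_div_add_atTop_nhds_zero_nat
        have hb : Tendsto (fun n : ℕ => (1 / (n + 1 : ℝ)) ^ (p / 2)) atTop (𝓝 0) := by
          have hc : ContinuousAt (fun z : ℝ => z ^ (p / 2)) 0 :=
            Real.continuousAt_rpow_const 0 (p / 2) (Or.inr (by positivity))
          have := (hc.tendsto).comp ha
          simpa [Function.comp_def, Real.zero_rpow (by positivity : (p:ℝ)/2 ≠ 0)] using this
        have := (ENNReal.continuous_ofReal.continuousAt.tendsto).comp hb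
        simp only [Function.comp, ENNReal.ofReal_zero] at this
        simpa using ENNReal.Tendsto.const_mul this (Or.inr hKne)
      exact tendsto_of_tendsto_of_tendsto_of_le_of_le tendsto_const_nhds h1
        (fun n => zero_le) (fun n => min_le_right _ _)
  -- conclude
  have hev : ∀ᶠ n : ℕ in atTop, J (1 / (n + 1 : ℝ)) < ε := step3 (Iio_mem_nhds hε)
  obtain ⟨n, hn⟩ := hev.exists
  have hb : (0 : ℝ) < 1 / (n + 1 : ℝ) := by
    have : (0:ℝ) < (n:ℝ) + 1 := by positivity
    exact one_div_pos.2 this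
  have hmem : Set.Ioo (0 : ℝ) (1 / (n + 1 : ℝ)) ∈ 𝓝[>] (0 : ℝ) :=
    Ioo_mem_nhdsGT_of_mem ⟨le_refl 0, hb⟩
  filter_upwards [hmem] with t ht
  calc ENNReal.ofReal (t ^ p) * (ν.prod ν) (G t) ≤ J t := step1 t ht.1
    _ ≤ J (1 / (n + 1 : ℝ)) := step2 t _ ht.1.le ht.2.le
    _ ≤ ε := hn.le

end Aux

section Aux2
set_option linter.unusedSectionVars false
set_option linter.unusedVariables false
variable {X : Type*} [MetricSpace X] [SecondCountableTopology X]
  [MeasurableSpace X] [BorelSpace X]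

lemma wms_upper {ν : Measure X} [SigmaFinite ν] {s C : ℝ} (hs : 0 < s) (hC : 0 < C)
    (hreg : ∀ (x : X) (r : ℝ), 0 < r → ν (ball x r) = ENNReal.ofReal (C * r ^ s))
    {p : ℝ} (hp : 1 ≤ p) {v : X → ℝ} (hv : Measurable v)
    (hI : (∫⁻ x, ENNReal.ofReal (|v x| ^ p) ∂ν) ≠ ⊤)
    {ε : ℝ≥0∞} (hε : 0 < ε) :
    ∀ᶠ lam in 𝓝[>] (0 : ℝ), ENNReal.ofReal (lam ^ p) *
      (ν.prod ν) {q : X × X | lam * dist q.1 q.2 ^ (s / p) ≤ |v q.1 - v q.2|}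
      ≤ ENNReal.ofReal (2 * C) * (∫⁻ x, ENNReal.ofReal (|v x| ^ p) ∂ν) + ε := by
  have hp0 : 0 < p := lt_of_lt_of_le one_pos hp
  set I := ∫⁻ x, ENNReal.ofReal (|v x| ^ p) ∂ν with hIdef
  set L := ENNReal.ofReal (2 * C) * I with hLdef
  have hLne : L ≠ ⊤ := ENNReal.mul_ne_top ENNReal.ofReal_ne_top hI
  have hε2 : 0 < ε / 2 := ENNReal.half_pos hε.ne'
  have hdm : Measurable fun q : X × X => dist q.1 q.2 ^ (s / p) :=
    continuous_dist.measurable.pow measurable_const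
  have hfI : Measurable fun x : X => ENNReal.ofReal (|v x| ^ p) :=
    (hv.abs.pow measurable_const).ennreal_ofReal
  -- choose δ
  have hδtend : Tendsto (fun δ : ℝ => ENNReal.ofReal (2 * C / (1 - δ) ^ p) * I)
      (𝓝[>] (0 : ℝ)) (𝓝 L) := by
    have hcont : ContinuousAt (fun δ : ℝ => 2 * C / (1 - δ) ^ p) 0 := by
      have h1 : ContinuousAt (fun δ : ℝ => (1 - δ) ^ p) 0 := by
        have hsub : ContinuousAt (fun δ : ℝ => 1 - δ) 0 :=
          (continuous_const.sub continuous_id).continuousAt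
        have hpow : ContinuousAt (fun x : ℝ => x ^ p) (1 - (0:ℝ)) := by
          simpa using Real.continuousAt_rpow_const 1 p (Or.inl one_ne_zero)
        exact hpow.comp hsub
      have h2 : (fun δ : ℝ => (1 - δ) ^ p) 0 ≠ 0 := by
        simp [Real.one_rpow]
      exact continuousAt_const.div h1 h2
    have htend : Tendsto (fun δ : ℝ => ENNReal.ofReal (2 * C / (1 - δ) ^ p)) (𝓝 (0:ℝ))
        (𝓝 (ENNReal.ofReal (2 * C / (1 - (0:ℝ)) ^ p))) :=
      (ENNReal.continuous_ofReal.continuousAt.comp hcont).tendsto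
    have h3 : Tendsto (fun δ : ℝ => ENNReal.ofReal (2 * C / (1 - δ) ^ p) * I) (𝓝[>] (0:ℝ))
        (𝓝 (ENNReal.ofReal (2 * C / (1 - (0:ℝ)) ^ p) * I)) :=
      ENNReal.Tendsto.mul_const (htend.mono_left nhdsWithin_le_nhds) (Or.inr hI)
    simpa [Real.one_rpow, hLdef] using h3
  have hδev := (wms_ev_le_add' hLne hε2 hδtend).and
    (Ioo_mem_nhdsGT_of_mem (Set.mem_Ico.2 ⟨le_refl (0:ℝ), one_half_pos⟩))
  obtain ⟨δ, hδ1, hδmem⟩ := hδev.exists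
  obtain ⟨hδpos, hδlt⟩ := hδmem
  have h1δ : 0 < 1 - δ := by linarith
  have hδp : (0:ℝ) < δ ^ p := Real.rpow_pos_of_pos hδpos p
  -- apply key lemma with ε₂
  set ε₂ : ℝ≥0∞ := (ε / 2) * ENNReal.ofReal (δ ^ p) with hε₂def
  have hε₂pos : 0 < ε₂ :=
    ENNReal.mul_pos hε2.ne' (ENNReal.ofReal_pos.2 hδp).ne'
  have hkey := wms_key hs hC hreg hp hv hI hε₂pos
  have hmap : Tendsto (fun lam : ℝ => δ * lam) (𝓝[>] (0:ℝ)) (𝓝[>] (0:ℝ)) := by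
    apply tendsto_nhdsWithin_of_tendsto_nhds_of_eventually_within
    · have : Tendsto (fun lam : ℝ => δ * lam) (𝓝 (0:ℝ)) (𝓝 (δ * 0)) :=
        (continuous_const.mul continuous_id).tendsto 0
      simpa using this.mono_left nhdsWithin_le_nhds
    · filter_upwards [self_mem_nhdsWithin] with lam hlam
      exact mul_pos hδpos hlam
  have hkey' := hmap.eventually hkey
  filter_upwards [hkey', self_mem_nhdsWithin] with lam hk hlam
  replace hlam : (0:ℝ) < lam := hlam
  have hlp : (0:ℝ) < lam ^ p := Real.rpow_pos_of_pos hlam p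
  set c : ℝ := (1 - δ) * lam with hcdef
  have hc : 0 < c := mul_pos h1δ hlam
  set E := {q : X × X | lam * dist q.1 q.2 ^ (s / p) ≤ |v q.1 - v q.2|} with hEdef
  set A' := {q : X × X | (1 - δ) * lam * dist q.1 q.2 ^ (s / p) ≤ |v q.1|} with hA'def
  set B' := {q : X × X | (1 - δ) * lam * dist q.1 q.2 ^ (s / p) ≤ |v q.2|} with hB'def
  set G' := {q : X × X | δ * lam * dist q.1 q.2 ^ (s / p) ≤ |v q.1| ∧
    δ * lam * dist q.1 q.2 ^ (s / p) ≤ |v q.2|} with hG'def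
  have hA'm : MeasurableSet A' :=
    measurableSet_le (measurable_const.mul hdm) (hv.comp measurable_fst).abs
  have hB'm : MeasurableSet B' :=
    measurableSet_le (measurable_const.mul hdm) (hv.comp measurable_snd).abs
  have hG'm : MeasurableSet G' :=
    (measurableSet_le (measurable_const.mul hdm) (hv.comp measurable_fst).abs).inter
      (measurableSet_le (measurable_const.mul hdm) (hv.comp measurable_snd).abs)
  have hsub : E ⊆ A' ∪ B' ∪ G' := by
    intro q hq
    simp only [hEdef, hA'def, hB'def, hG'def, Set.mem_setOf_eq, Set.mem_union] at *
    by_cases h1 : (1 - δ) * lam * dist q.1 q.2 ^ (s / p) ≤ |v q.1|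
    · exact Or.inl (Or.inl h1)
    · by_cases h2 : (1 - δ) * lam * dist q.1 q.2 ^ (s / p) ≤ |v q.2|
      · exact Or.inl (Or.inr h2)
      · refine Or.inr ⟨?_, ?_⟩
        · have habs : |v q.1 - v q.2| ≤ |v q.1| + |v q.2| := abs_sub _ _
          push_neg at h1 h2
          nlinarith [hq, habs]
        · have habs : |v q.1 - v q.2| ≤ |v q.1| + |v q.2| := abs_sub _ _
          push_neg at h1 h2
          nlinarith [hq, habs]
  -- measure of A'
  have hμA : (ν.prod ν) A' = ENNReal.ofReal (C / c ^ p) * I := by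
    rw [Measure.prod_apply hA'm]
    have hx : ∀ x : X, ν (Prod.mk x ⁻¹' A')
        = ENNReal.ofReal (C / c ^ p) * ENNReal.ofReal (|v x| ^ p) := by
      intro x
      have hpre : Prod.mk x ⁻¹' A' = {y : X | c * dist x y ^ (s / p) ≤ |v x|} := by
        rw [hA'def, hcdef]; rfl
      rw [hpre, wms_slice_eq hs hp0 hc (abs_nonneg _),
        wms_closedBall_meas ν hs hC hreg x (by positivity),
        ← Real.rpow_mul (by positivity), div_mul_cancel₀ _ hs.ne',
        Real.div_rpow (abs_nonneg _) hc.le, ← ENNReal.ofReal_mul (by positivity)]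
      congr 1
      field_simp
    simp_rw [hx]
    rw [lintegral_const_mul _ hfI]
  have hμB : (ν.prod ν) B' = (ν.prod ν) A' := by
    have hBswap : B' = Prod.swap ⁻¹' A' := by
      ext q
      simp only [hA'def, hB'def, Set.mem_preimage, Set.mem_setOf_eq, Prod.fst_swap,
        Prod.snd_swap, dist_comm]
    rw [hBswap, ← Measure.map_apply measurable_swap hA'm, Measure.prod_swap]
  -- the main estimate
  have hmain : (ν.prod ν) E ≤ (ν.prod ν) A' + (ν.prod ν) B' + (ν.prod ν) G' :=
    le_trans (measure_mono hsub)
      (le_trans (measure_union_le _ _) (add_le_add_left (measure_union_le _ _) _))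
  calc ENNReal.ofReal (lam ^ p) * (ν.prod ν) E
      ≤ ENNReal.ofReal (lam ^ p) * ((ν.prod ν) A' + (ν.prod ν) B' + (ν.prod ν) G') :=
        mul_le_mul_right hmain _
    _ = ENNReal.ofReal (lam ^ p) * (ν.prod ν) A' + ENNReal.ofReal (lam ^ p) * (ν.prod ν) B'
        + ENNReal.ofReal (lam ^ p) * (ν.prod ν) G' := by ring
    _ ≤ ENNReal.ofReal (2 * C / (1 - δ) ^ p) * I + ε / 2 := by
        have e1 : ENNReal.ofReal (lam ^ p) * (ν.prod ν) A'
            = ENNReal.ofReal (C / (1 - δ) ^ p) * I := by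
          rw [hμA, ← mul_assoc, ← ENNReal.ofReal_mul (by positivity)]
          congr 2
          rw [hcdef, Real.mul_rpow h1δ.le hlam.le]
          field_simp
        have e3 : ENNReal.ofReal (lam ^ p) * (ν.prod ν) G' ≤ ε / 2 := by
          have hdecomp : ENNReal.ofReal (lam ^ p)
              = ENNReal.ofReal ((δ ^ p)⁻¹) * ENNReal.ofReal ((δ * lam) ^ p) := by
            rw [← ENNReal.ofReal_mul (by positivity)]
            congr 1
            rw [Real.mul_rpow hδpos.le hlam.le]
            field_simp
          calc ENNReal.ofReal (lam ^ p) * (ν.prod ν) G'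
              = ENNReal.ofReal ((δ ^ p)⁻¹) *
                  (ENNReal.ofReal ((δ * lam) ^ p) * (ν.prod ν) G') := by
                rw [hdecomp]; ring
            _ ≤ ENNReal.ofReal ((δ ^ p)⁻¹) * ε₂ := by
                exact mul_le_mul_right hk _
            _ = ε / 2 := by
                rw [hε₂def, ← mul_assoc, mul_comm (ENNReal.ofReal ((δ ^ p)⁻¹)) (ε/2),
                  mul_assoc, ← ENNReal.ofReal_mul (by positivity),
                  inv_mul_cancel₀ hδp.ne', ENNReal.ofReal_one, mul_one]
        have e4 : ENNReal.ofReal (2 * C / (1 - δ) ^ p) * I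
            = ENNReal.ofReal (C / (1 - δ) ^ p) * I + ENNReal.ofReal (C / (1 - δ) ^ p) * I := by
          rw [← two_mul, ← mul_assoc]
          congr 1
          rw [show (2:ℝ≥0∞) = ENNReal.ofReal 2 by simp,
            ← ENNReal.ofReal_mul (by norm_num)]
          congr 1
          ring
        rw [e1, hμB, e1, e4]
        exact add_le_add le_rfl e3
    _ ≤ (L + ε / 2) + ε / 2 := add_le_add_left hδ1 _
    _ = L + ε := by rw [add_assoc, ENNReal.add_halves]

lemma wms_lower {ν : Measure X} [SigmaFinite ν] {s C : ℝ} (hs : 0 < s) (hC : 0 < C)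
    (hreg : ∀ (x : X) (r : ℝ), 0 < r → ν (ball x r) = ENNReal.ofReal (C * r ^ s))
    {p : ℝ} (hp : 1 ≤ p) {v : X → ℝ} (hv : Measurable v)
    (hI : (∫⁻ x, ENNReal.ofReal (|v x| ^ p) ∂ν) ≠ ⊤)
    {ε : ℝ≥0∞} (hε : 0 < ε) :
    ∀ᶠ lam in 𝓝[>] (0 : ℝ),
      ENNReal.ofReal (2 * C) * (∫⁻ x, ENNReal.ofReal (|v x| ^ p) ∂ν)
        ≤ ENNReal.ofReal (lam ^ p) *
          (ν.prod ν) {q : X × X | lam * dist q.1 q.2 ^ (s / p) ≤ |v q.1 - v q.2|} + ε := by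
  have hp0 : 0 < p := lt_of_lt_of_le one_pos hp
  set f : X → ℝ≥0∞ := fun x => ENNReal.ofReal (|v x| ^ p) with hfdef
  set I := ∫⁻ x, f x ∂ν with hIdef
  set L := ENNReal.ofReal (2 * C) * I with hLdef
  have hLne : L ≠ ⊤ := ENNReal.mul_ne_top ENNReal.ofReal_ne_top hI
  have hε2 : 0 < ε / 2 := ENNReal.half_pos hε.ne'
  have hε4 : 0 < ε / 2 / 2 := ENNReal.half_pos hε2.ne'
  have hdm : Measurable fun q : X × X => dist q.1 q.2 ^ (s / p) :=
    continuous_dist.measurable.pow measurable_const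
  have hfI : Measurable f := (hv.abs.pow measurable_const).ennreal_ofReal
  -- monotone convergence to choose the level a
  set S : ℕ → Set X := fun n => {x | 1 / (n + 1 : ℝ) ≤ |v x|} with hSdef
  have hSm : ∀ n, MeasurableSet (S n) :=
    fun n => measurableSet_le measurable_const hv.abs
  set g : ℕ → X → ℝ≥0∞ := fun n => (S n).indicator f with hgdef
  have hg : ∀ n, Measurable (g n) := fun n => hfI.indicator (hSm n)
  have hmono : Monotone g := by
    intro m n hmn
    apply Set.indicator_le_indicator_of_subset
    · intro x hx
      have h2 : (m + 1 : ℝ) ≤ (n + 1 : ℝ) := by exact_mod_cast Nat.succ_le_succ hmn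
      have h1 : 1 / (n + 1 : ℝ) ≤ 1 / (m + 1 : ℝ) :=
        one_div_le_one_div_of_le (by positivity) h2
      exact le_trans h1 hx
    · intro x; exact zero_le
  have hsup : ∀ x, ⨆ n, g n x = f x := by
    intro x
    refine le_antisymm (iSup_le fun n => Set.indicator_le_self _ _ x) ?_
    rcases eq_or_lt_of_le (abs_nonneg (v x)) with h0 | h0
    · have : f x = 0 := by
        simp [hfdef, ← h0, Real.zero_rpow hp0.ne']
      rw [this]; exact zero_le
    · obtain ⟨n, hn⟩ := exists_nat_one_div_lt h0
      have hmem : x ∈ S n := hn.le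
      refine le_trans ?_ (le_iSup (fun n => g n x) n)
      exact le_of_eq (Set.indicator_of_mem hmem f).symm
  have hIsup : Tendsto (fun n => ∫⁻ x, g n x ∂ν) atTop (𝓝 I) := by
    have h1 : I = ⨆ n, ∫⁻ x, g n x ∂ν := by
      rw [hIdef, ← lintegral_iSup hg hmono]
      exact lintegral_congr fun x => (hsup x).symm
    rw [h1]
    exact tendsto_atTop_iSup fun m n hmn => lintegral_mono (hmono hmn)
  have hIa_le : ∀ n, ∫⁻ x, g n x ∂ν ≤ I :=
    fun n => lintegral_mono fun x => Set.indicator_le_self _ _ x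
  have hchoose := wms_ev_le_add hLne hε4
    (ENNReal.Tendsto.const_mul hIsup (Or.inr ENNReal.ofReal_ne_top)
      (a := ENNReal.ofReal (2 * C)))
  obtain ⟨n₀, hn₀⟩ := hchoose.exists
  set a : ℝ := 1 / (n₀ + 1 : ℝ) with hadef
  have ha : 0 < a := by positivity
  set Ia0 := ∫⁻ x, g n₀ x ∂ν with hIa0def
  have hIa0ne : Ia0 ≠ ⊤ := ((hIa_le n₀).trans_lt (lt_top_iff_ne_top.2 hI)).ne
  -- choose δ
  have hδtend : Tendsto (fun δ : ℝ => ENNReal.ofReal (2 * C * (1 - δ) ^ p) * Ia0)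
      (𝓝[>] (0 : ℝ)) (𝓝 (ENNReal.ofReal (2 * C) * Ia0)) := by
    have h1 : ContinuousAt (fun δ : ℝ => (1 - δ) ^ p) 0 := by
      have hsub : ContinuousAt (fun δ : ℝ => 1 - δ) 0 :=
        (continuous_const.sub continuous_id).continuousAt
      have hpow : ContinuousAt (fun x : ℝ => x ^ p) (1 - (0:ℝ)) := by
        simpa using Real.continuousAt_rpow_const 1 p (Or.inl one_ne_zero)
      exact hpow.comp hsub
    have hcont : ContinuousAt (fun δ : ℝ => 2 * C * (1 - δ) ^ p) 0 :=
      continuousAt_const.mul h1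
    have htend : Tendsto (fun δ : ℝ => ENNReal.ofReal (2 * C * (1 - δ) ^ p)) (𝓝 (0:ℝ))
        (𝓝 (ENNReal.ofReal (2 * C * (1 - (0:ℝ)) ^ p))) :=
      (ENNReal.continuous_ofReal.continuousAt.comp hcont).tendsto
    have h3 : Tendsto (fun δ : ℝ => ENNReal.ofReal (2 * C * (1 - δ) ^ p) * Ia0) (𝓝[>] (0:ℝ))
        (𝓝 (ENNReal.ofReal (2 * C * (1 - (0:ℝ)) ^ p) * Ia0)) :=
      ENNReal.Tendsto.mul_const (htend.mono_left nhdsWithin_le_nhds) (Or.inr hIa0ne)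
    simpa [Real.one_rpow] using h3
  have hIa0ne' : ENNReal.ofReal (2 * C) * Ia0 ≠ ⊤ :=
    ENNReal.mul_ne_top ENNReal.ofReal_ne_top hIa0ne
  have hδev := (wms_ev_le_add hIa0ne' hε4 hδtend).and
    (Ioo_mem_nhdsGT_of_mem (Set.mem_Ico.2 ⟨le_refl (0:ℝ), one_half_pos⟩))
  obtain ⟨δ, hδ1, hδpos, hδlt⟩ := hδev.exists
  have h1δ : 0 < 1 - δ := by linarith
  -- tail masses
  set M := ν {x | δ * a ≤ |v x|} with hMdef
  set ma := ν {x | a ≤ |v x|} with hmadef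
  have hMne : M ≠ ⊤ := by
    refine ((wms_cheb hp0 hv (by positivity : (0:ℝ) < δ * a)).trans_lt ?_).ne
    exact ENNReal.div_lt_top hI (ENNReal.ofReal_pos.2 (by positivity)).ne'
  have hmane : ma ≠ ⊤ := by
    refine ((wms_cheb hp0 hv ha).trans_lt ?_).ne
    exact ENNReal.div_lt_top hI (ENNReal.ofReal_pos.2 (by positivity)).ne'
  set K2 : ℝ≥0∞ := 2 * (M * ma) with hK2def
  have hK2ne : K2 ≠ ⊤ := by
    simp only [hK2def]
    exact ENNReal.mul_ne_top (by simp) (ENNReal.mul_ne_top hMne hmane)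
  -- eventually the error term is small
  have htl : Tendsto (fun lam : ℝ => K2 * ENNReal.ofReal (lam ^ p)) (𝓝[>] (0:ℝ)) (𝓝 0) := by
    have h1 : Tendsto (fun lam : ℝ => lam ^ p) (𝓝[>] (0:ℝ)) (𝓝 0) := by
      have := (Real.continuousAt_rpow_const 0 p (Or.inr hp0.le)).tendsto
      rw [Real.zero_rpow hp0.ne'] at this
      exact this.mono_left nhdsWithin_le_nhds
    have h2 := (ENNReal.continuous_ofReal.continuousAt.tendsto).comp h1
    simp only [Function.comp, ENNReal.ofReal_zero] at h2
    have h3 := ENNReal.Tendsto.const_mul h2 (Or.inr hK2ne) (a := K2)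
    simpa using h3
  have hev3 : ∀ᶠ lam in 𝓝[>] (0:ℝ), K2 * ENNReal.ofReal (lam ^ p) < ε / 2 :=
    htl (Iio_mem_nhds hε2)
  filter_upwards [hev3, self_mem_nhdsWithin] with lam h3 hlam
  replace hlam : (0:ℝ) < lam := hlam
  -- the good sets
  set E := {q : X × X | lam * dist q.1 q.2 ^ (s / p) ≤ |v q.1 - v q.2|} with hEdef
  set A := {q : X × X | a ≤ |v q.1| ∧ |v q.2| < δ * |v q.1| ∧
    lam * dist q.1 q.2 ^ (s / p) ≤ (1 - δ) * |v q.1|} with hAdef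
  have hAm : MeasurableSet A := by
    refine (measurableSet_le measurable_const (hv.comp measurable_fst).abs).inter
      ((measurableSet_lt (hv.comp measurable_snd).abs
        (measurable_const.mul (hv.comp measurable_fst).abs)).inter
      (measurableSet_le (measurable_const.mul hdm)
        (measurable_const.mul (hv.comp measurable_fst).abs)))
  set B := Prod.swap ⁻¹' A with hBdef
  have hBm : MeasurableSet B := hAm.preimage measurable_swap
  have hAE : A ⊆ E := by
    rintro q ⟨hq1, hq2, hq3⟩
    have habs : |v q.1| - |v q.2| ≤ |v q.1 - v q.2| := abs_sub_abs_le_abs_sub _ _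
    simp only [hEdef, Set.mem_setOf_eq]
    nlinarith [hq2, hq3, habs]
  have hBE : B ⊆ E := by
    rintro q hq
    obtain ⟨hq1, hq2, hq3⟩ := hq
    have habs : |v q.2| - |v q.1| ≤ |v q.2 - v q.1| := abs_sub_abs_le_abs_sub _ _
    simp only [hEdef, Set.mem_setOf_eq]
    rw [abs_sub_comm]
    rw [dist_comm q.1 q.2]
    simp only [Prod.fst_swap, Prod.snd_swap] at hq1 hq2 hq3
    nlinarith [hq2, hq3, habs]
  have hdisj : Disjoint A B := by
    rw [Set.disjoint_left]
    rintro q ⟨ha1, ha2, _⟩ hqB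
    obtain ⟨hb1, hb2, _⟩ := hqB
    simp only [Prod.fst_swap, Prod.snd_swap] at hb1 hb2
    have hv1 : 0 < |v q.1| := lt_of_lt_of_le ha ha1
    nlinarith [ha2, hb2, hv1, hδpos, hδlt]
  have hswap : (ν.prod ν) B = (ν.prod ν) A := by
    rw [hBdef, ← Measure.map_apply measurable_swap hAm, Measure.prod_swap]
  have hEdouble : 2 * (ν.prod ν) A ≤ (ν.prod ν) E := by
    rw [two_mul]
    calc (ν.prod ν) A + (ν.prod ν) A = (ν.prod ν) A + (ν.prod ν) B := by rw [hswap]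
      _ = (ν.prod ν) (A ∪ B) := (measure_union hdisj hBm).symm
      _ ≤ (ν.prod ν) E := measure_mono (Set.union_subset hAE hBE)
  -- per-point closed ball estimate
  set Sa := {x : X | a ≤ |v x|} with hSadef
  have hIa0' : Ia0 = ∫⁻ x in Sa, f x ∂ν := by
    rw [hIa0def, hgdef]
    simp only []
    rw [lintegral_indicator (hSm n₀)]
  have hcb : ∀ x ∈ Sa, ENNReal.ofReal (C * ((1 - δ) / lam) ^ p * |v x| ^ p)
      ≤ ν (Prod.mk x ⁻¹' A) + M := by
    intro x hx
    have hx' : a ≤ |v x| := hx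
    have hR : (0:ℝ) ≤ ((1 - δ) * |v x| / lam) ^ (p / s) := by positivity
    have hcb0 : closedBall x (((1 - δ) * |v x| / lam) ^ (p / s))
        ⊆ (Prod.mk x ⁻¹' A) ∪ {y : X | δ * |v x| ≤ |v y|} := by
      intro y hy
      by_cases hvy : |v y| < δ * |v x|
      · left
        have hseteq := wms_slice_eq (X := X) hs hp0 hlam
          (c := (1 - δ) * |v x|) (by positivity) x
        rw [← hseteq] at hy
        exact ⟨hx', hvy, hy⟩
      · exact Or.inr (le_of_not_gt hvy)
    have hmeas : ν (closedBall x (((1 - δ) * |v x| / lam) ^ (p / s)))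
        = ENNReal.ofReal (C * ((1 - δ) / lam) ^ p * |v x| ^ p) := by
      rw [wms_closedBall_meas ν hs hC hreg x hR, ← Real.rpow_mul (by positivity),
        div_mul_cancel₀ _ hs.ne']
      congr 1
      rw [show (1 - δ) * |v x| / lam = (1 - δ) / lam * |v x| by ring,
        Real.mul_rpow (by positivity) (abs_nonneg _)]
      ring
    calc ENNReal.ofReal (C * ((1 - δ) / lam) ^ p * |v x| ^ p)
        = ν (closedBall x (((1 - δ) * |v x| / lam) ^ (p / s))) := hmeas.symm
      _ ≤ ν (Prod.mk x ⁻¹' A) + ν {y : X | δ * |v x| ≤ |v y|} :=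
          (measure_mono hcb0).trans (measure_union_le _ _)
      _ ≤ ν (Prod.mk x ⁻¹' A) + M := by
          refine add_le_add_right (measure_mono fun y hy => ?_) _
          exact le_trans (mul_le_mul_of_nonneg_left hx' hδpos.le) hy
  -- integrate over Sa
  have hint : ENNReal.ofReal (C * ((1 - δ) / lam) ^ p) * Ia0 ≤ (ν.prod ν) A + M * ma := by
    have h1 : ∫⁻ x in Sa, ENNReal.ofReal (C * ((1 - δ) / lam) ^ p * |v x| ^ p) ∂ν
        = ENNReal.ofReal (C * ((1 - δ) / lam) ^ p) * Ia0 := by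
      rw [hIa0']
      rw [← lintegral_const_mul _ hfI]
      refine lintegral_congr fun x => ?_
      rw [hfdef]
      simp only []
      rw [← ENNReal.ofReal_mul (by positivity), mul_assoc]
    calc ENNReal.ofReal (C * ((1 - δ) / lam) ^ p) * Ia0
        = ∫⁻ x in Sa, ENNReal.ofReal (C * ((1 - δ) / lam) ^ p * |v x| ^ p) ∂ν := h1.symm
      _ ≤ ∫⁻ x in Sa, (ν (Prod.mk x ⁻¹' A) + M) ∂ν :=
          setLIntegral_mono ((measurable_measure_prodMk_left hAm).add measurable_const) hcb
      _ = ∫⁻ x in Sa, ν (Prod.mk x ⁻¹' A) ∂ν + M * ν Sa := by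
          rw [lintegral_add_right _ measurable_const, setLIntegral_const]
      _ ≤ (ν.prod ν) A + M * ma := by
          refine add_le_add ?_ le_rfl
          exact (setLIntegral_le_lintegral _ _).trans_eq (Measure.prod_apply hAm).symm
  -- main step
  have hmm : ENNReal.ofReal (2 * C * (1 - δ) ^ p) * Ia0
      ≤ ENNReal.ofReal (lam ^ p) * (ν.prod ν) E + K2 * ENNReal.ofReal (lam ^ p) := by
    have e0 : ENNReal.ofReal (2 * C * (1 - δ) ^ p) * Ia0
        = ENNReal.ofReal (lam ^ p) *
          (2 * (ENNReal.ofReal (C * ((1 - δ) / lam) ^ p) * Ia0)) := by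
      rw [show (2:ℝ≥0∞) = ENNReal.ofReal 2 by simp]
      rw [show ENNReal.ofReal (lam ^ p) * (ENNReal.ofReal 2 *
            (ENNReal.ofReal (C * ((1 - δ) / lam) ^ p) * Ia0))
          = (ENNReal.ofReal (lam ^ p) * ENNReal.ofReal 2 *
            ENNReal.ofReal (C * ((1 - δ) / lam) ^ p)) * Ia0 by ring]
      rw [← ENNReal.ofReal_mul (by positivity), ← ENNReal.ofReal_mul (by positivity)]
      congr 2
      rw [Real.div_rpow h1δ.le hlam.le]
      have hlp : (0:ℝ) < lam ^ p := Real.rpow_pos_of_pos hlam p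
      field_simp
    rw [e0]
    calc ENNReal.ofReal (lam ^ p) *
          (2 * (ENNReal.ofReal (C * ((1 - δ) / lam) ^ p) * Ia0))
        ≤ ENNReal.ofReal (lam ^ p) * (2 * ((ν.prod ν) A + M * ma)) :=
          mul_le_mul_right (mul_le_mul_right hint _) _
      _ = ENNReal.ofReal (lam ^ p) * (2 * (ν.prod ν) A) + K2 * ENNReal.ofReal (lam ^ p) := by
          rw [hK2def]; ring
      _ ≤ ENNReal.ofReal (lam ^ p) * (ν.prod ν) E + K2 * ENNReal.ofReal (lam ^ p) :=
          add_le_add_left (mul_le_mul_right hEdouble _) _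
  -- final chain
  calc L ≤ ENNReal.ofReal (2 * C) * Ia0 + ε / 2 / 2 := hn₀
    _ ≤ (ENNReal.ofReal (2 * C * (1 - δ) ^ p) * Ia0 + ε / 2 / 2) + ε / 2 / 2 :=
        add_le_add_left hδ1 _
    _ = ENNReal.ofReal (2 * C * (1 - δ) ^ p) * Ia0 + ε / 2 := by
        rw [add_assoc, ENNReal.add_halves]
    _ ≤ (ENNReal.ofReal (lam ^ p) * (ν.prod ν) E + K2 * ENNReal.ofReal (lam ^ p)) + ε / 2 :=
        add_le_add_left hmm _
    _ ≤ (ENNReal.ofReal (lam ^ p) * (ν.prod ν) E + ε / 2) + ε / 2 :=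
        add_le_add_left (add_le_add_right h3.le _) _
    _ = ENNReal.ofReal (lam ^ p) * (ν.prod ν) E + ε := by
        rw [add_assoc, ENNReal.add_halves]

end Aux2

theorem weak_MS_limit_exact_Ahlfors
    {X : Type*} [MetricSpace X] [CompleteSpace X] [SecondCountableTopology X]
    [MeasurableSpace X] [BorelSpace X]
    (ν : Measure X) [SigmaFinite ν]
    (hX : ν Set.univ = ⊤)
    (s C : ℝ) (hs : 0 < s) (hC : 0 < C)
    (hreg : ∀ (x : X) (r : ℝ), 0 < r → ν (ball x r) = ENNReal.ofReal (C * r ^ s))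
    (p : ℝ) (hp : 1 ≤ p) (u : X → ℝ) (hu : MemLp u (ENNReal.ofReal p) ν) :
    Tendsto (fun lam : ℝ => ENNReal.ofReal (lam ^ p) *
        (ν.prod ν) {q : X × X | lam * dist q.1 q.2 ^ (s / p) ≤ |u q.1 - u q.2|})
      (𝓝[>] 0)
      (𝓝 (ENNReal.ofReal (2 * C) * ∫⁻ x, ENNReal.ofReal (|u x| ^ p) ∂ν)) := by
  have hp0 : 0 < p := lt_of_lt_of_le one_pos hp
  obtain ⟨v, hvm, huv⟩ : ∃ v : X → ℝ, Measurable v ∧ u =ᵐ[ν] v :=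
    ⟨hu.1.mk u, hu.1.stronglyMeasurable_mk.measurable, hu.1.ae_eq_mk⟩
  have hIuv : ∫⁻ x, ENNReal.ofReal (|u x| ^ p) ∂ν = ∫⁻ x, ENNReal.ofReal (|v x| ^ p) ∂ν :=
    lintegral_congr_ae (huv.mono fun x hx => by simp only [hx])
  have hN : ν {x | ¬ u x = v x} = 0 := huv
  have hEuv : ∀ lam : ℝ,
      (ν.prod ν) {q : X × X | lam * dist q.1 q.2 ^ (s / p) ≤ |u q.1 - u q.2|}
      = (ν.prod ν) {q : X × X | lam * dist q.1 q.2 ^ (s / p) ≤ |v q.1 - v q.2|} := by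
    intro lam
    apply measure_congr
    rw [ae_eq_set]
    have hnull : (ν.prod ν) ({x | ¬ u x = v x} ×ˢ (Set.univ : Set X)
        ∪ (Set.univ : Set X) ×ˢ {x | ¬ u x = v x}) = 0 := by
      apply measure_union_null
      · rw [Measure.prod_prod, hN, zero_mul]
      · rw [Measure.prod_prod, hN, mul_zero]
    constructor
    · refine measure_mono_null (fun q hq => ?_) hnull
      obtain ⟨h1, h2⟩ := hq
      simp only [Set.mem_union, Set.mem_prod, Set.mem_univ, and_true, true_and,
        Set.mem_setOf_eq]
      by_cases hu1 : u q.1 = v q.1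
      · by_cases hu2 : u q.2 = v q.2
        · refine absurd ?_ h2
          simp only [Set.mem_setOf_eq] at h1 ⊢
          rw [← hu1, ← hu2]; exact h1
        · exact Or.inr hu2
      · exact Or.inl hu1
    · refine measure_mono_null (fun q hq => ?_) hnull
      obtain ⟨h1, h2⟩ := hq
      simp only [Set.mem_union, Set.mem_prod, Set.mem_univ, and_true, true_and,
        Set.mem_setOf_eq]
      by_cases hu1 : u q.1 = v q.1
      · by_cases hu2 : u q.2 = v q.2
        · refine absurd ?_ h2
          simp only [Set.mem_setOf_eq] at h1 ⊢
          rw [hu1, hu2]; exact h1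
        · exact Or.inr hu2
      · exact Or.inl hu1
  have hIne : (∫⁻ x, ENNReal.ofReal (|v x| ^ p) ∂ν) ≠ ⊤ := by
    rw [← hIuv]
    have hpne : (ENNReal.ofReal p) ≠ 0 := by
      simp only [ne_eq, ENNReal.ofReal_eq_zero, not_le]
      exact hp0
    have h2 := hu.2
    rw [eLpNorm_eq_lintegral_rpow_enorm_toReal hpne ENNReal.ofReal_ne_top,
      ENNReal.toReal_ofReal hp0.le] at h2
    intro htop
    have heq : (∫⁻ x, ‖u x‖ₑ ^ p ∂ν) = ⊤ := by
      rw [← htop]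
      refine lintegral_congr fun x => ?_
      rw [Real.enorm_eq_ofReal_abs, ENNReal.ofReal_rpow_of_nonneg (abs_nonneg _) hp0.le]
    rw [heq] at h2
    rw [ENNReal.top_rpow_of_pos (by positivity : (0:ℝ) < 1 / p)] at h2
    exact absurd h2 (lt_irrefl ⊤)
  have hfuneq : (fun lam : ℝ => ENNReal.ofReal (lam ^ p) *
        (ν.prod ν) {q : X × X | lam * dist q.1 q.2 ^ (s / p) ≤ |u q.1 - u q.2|})
      = fun lam : ℝ => ENNReal.ofReal (lam ^ p) *
        (ν.prod ν) {q : X × X | lam * dist q.1 q.2 ^ (s / p) ≤ |v q.1 - v q.2|} :=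
    funext fun lam => by rw [hEuv lam]
  rw [hfuneq, hIuv]
  have hLne : ENNReal.ofReal (2 * C) * (∫⁻ x, ENNReal.ofReal (|v x| ^ p) ∂ν) ≠ ⊤ :=
    ENNReal.mul_ne_top ENNReal.ofReal_ne_top hIne
  rw [ENNReal.tendsto_nhds hLne]
  intro ε hε
  filter_upwards [wms_upper hs hC hreg hp hvm hIne hε, wms_lower hs hC hreg hp hvm hIne hε]
    with lam h1 h2
  exact ⟨tsub_le_iff_right.2 h2, h1⟩
end

section
/- Let f: [0,∞) → [0,∞) be a convex increasing function with f(0) = 0, and let (X,d,ν) be a metric measure space with ν(B(x,r)) ≤ C_{f,A} f(r) for all x ∈ X, r > 0. Then for all p ∈ [1,∞), u ∈ L^p(X,ν), and λ > 0: λ^p (ν⊗ν)({(x,y) : |u(x)-u(y)|^p ≥ λ^p f(d(x,y))}) ≤ 2^{p+1} C_{f,A} ‖u‖_{L^p(X,ν)}^p. -/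
open MeasureTheory Metric Filter Topology

lemma key_ball_bound {X : Type*} [MetricSpace X] [MeasurableSpace X]
    (ν : Measure X) (f : ℝ → ℝ) (hconv : ConvexOn ℝ (Set.Ici 0) f)
    (hmono : MonotoneOn f (Set.Ici 0)) (hf0 : f 0 = 0)
    (C_fA : ℝ) (hCfA : 0 < C_fA)
    (hreg : ∀ (x : X) (r : ℝ), 0 < r → ν (ball x r) ≤ ENNReal.ofReal (C_fA * f r))
    (x : X) (t : ℝ) (ht : 0 ≤ t) :
    ν {y | f (dist x y) ≤ t} ≤ ENNReal.ofReal (C_fA * t) := by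
  -- convexity chord bound : for 0 ≤ a ≤ R, f a ≤ (a/R) * f R
  have chord : ∀ a R : ℝ, 0 < R → 0 ≤ a → a ≤ R → f a ≤ (a / R) * f R := by
    intro a R hR ha haR
    have hs0 : (0:ℝ) ≤ a / R := div_nonneg ha hR.le
    have hs1 : a / R ≤ 1 := (div_le_one hR).2 haR
    have := hconv.2 (Set.self_mem_Ici) (Set.mem_Ici.2 hR.le)
      (by linarith : (0:ℝ) ≤ 1 - a / R) hs0 (by ring)
    simp only [smul_eq_mul, mul_zero, hf0, mul_zero, zero_add] at this
    rw [div_mul_cancel₀ _ hR.ne'] at this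
    linarith [this]
  by_cases hA : ∃ R : ℝ, 0 < R ∧ t < f R
  · obtain ⟨R, hR, htR⟩ := hA
    apply ENNReal.le_of_forall_pos_le_add
    intro ε hε _
    set ε' : ℝ := (ε : ℝ) / C_fA with hε'def
    have hε' : 0 < ε' := div_pos (by exact_mod_cast hε) hCfA
    -- target value
    set v : ℝ := min (t + ε') (f R) with hvdef
    have hv1 : t < v := lt_min (by linarith) htR
    have hv2 : v ≤ f R := min_le_right _ _
    have hv3 : v ≤ t + ε' := min_le_left _ _
    have hfR : 0 < f R := lt_of_le_of_lt ht htR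
    -- small point a with f a ≤ v
    set a : ℝ := min R (v * R / f R) with hadef
    have hv0 : 0 < v := lt_of_le_of_lt ht hv1
    have ha0 : 0 < a := lt_min hR (by positivity)
    have haR : a ≤ R := min_le_left _ _
    have hfa : f a ≤ v := by
      have := chord a R hR ha0.le haR
      have h2 : a / R * f R ≤ v := by
        have : a ≤ v * R / f R := min_le_right _ _
        rw [div_mul_eq_mul_div, div_le_iff₀ hR]
        calc a * f R ≤ (v * R / f R) * f R := by
              apply mul_le_mul_of_nonneg_right this hfR.le
          _ = v * R := by field_simp
      linarith
    -- continuity on [a, R]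
    have hcont : ContinuousOn f (Set.Icc a R) := by
      have h := hconv.continuousOn_interior
      rw [interior_Ici] at h
      exact h.mono (fun z hz => lt_of_lt_of_le ha0 hz.1)
    -- IVT
    have hIVT := intermediate_value_Icc haR hcont
    have hvmem : v ∈ Set.Icc (f a) (f R) := ⟨hfa, hv2⟩
    obtain ⟨r, hrmem, hfr⟩ := hIVT hvmem
    have hr0 : 0 < r := lt_of_lt_of_le ha0 hrmem.1
    -- the set is contained in ball x r
    have hsub : {y | f (dist x y) ≤ t} ⊆ ball x r := by
      intro y hy
      simp only [Set.mem_setOf_eq] at hy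
      rw [mem_ball, dist_comm]
      by_contra h
      push_neg at h
      have := hmono (Set.mem_Ici.2 hr0.le) (Set.mem_Ici.2 (hr0.le.trans h)) h
      rw [hfr] at this
      exact absurd (this.trans hy) (not_le.2 hv1)
    calc ν {y | f (dist x y) ≤ t} ≤ ν (ball x r) := measure_mono hsub
      _ ≤ ENNReal.ofReal (C_fA * f r) := hreg x r hr0
      _ ≤ ENNReal.ofReal (C_fA * t + C_fA * ε') := by
          apply ENNReal.ofReal_le_ofReal
          rw [hfr]; nlinarith
      _ ≤ ENNReal.ofReal (C_fA * t) + ENNReal.ofReal (C_fA * ε') :=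
          ENNReal.ofReal_add_le
      _ = ENNReal.ofReal (C_fA * t) + ε := by
          rw [hε'def, mul_div_cancel₀ _ hCfA.ne', ENNReal.ofReal_coe_nnreal]
  · push_neg at hA
    calc ν {y | f (dist x y) ≤ t} ≤ ν (⋃ n : ℕ, ball x (n + 1)) := by
          apply measure_mono
          intro y _
          simp only [Set.mem_iUnion, mem_ball]
          exact ⟨⌈dist y x⌉₊, lt_of_le_of_lt (Nat.le_ceil _) (by exact_mod_cast Nat.lt_succ_self _)⟩
      _ = ⨆ n : ℕ, ν (ball x (n + 1)) := by
          apply Directed.measure_iUnion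
          apply Monotone.directed_le
          intro n m hnm
          exact ball_subset_ball (add_le_add_left (Nat.cast_le.2 hnm) 1)
      _ ≤ ENNReal.ofReal (C_fA * t) := by
          apply iSup_le
          intro n
          refine (hreg x (n+1) (by positivity)).trans (ENNReal.ofReal_le_ofReal ?_)
          have := hA (n+1) (by positivity)
          nlinarith


theorem weak_upper_bound_f_Ahlfors
    {X : Type*} [MetricSpace X] [CompleteSpace X] [SecondCountableTopology X]
    [MeasurableSpace X] [BorelSpace X]
    (ν : Measure X) [SigmaFinite ν]
    (f : ℝ → ℝ) (hconv : ConvexOn ℝ (Set.Ici 0) f) (hmono : MonotoneOn f (Set.Ici 0))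
    (hf0 : f 0 = 0) (hfnn : ∀ r : ℝ, 0 ≤ r → 0 ≤ f r)
    (C_fA : ℝ) (hCfA : 0 < C_fA)
    (hreg : ∀ (x : X) (r : ℝ), 0 < r → ν (ball x r) ≤ ENNReal.ofReal (C_fA * f r))
    (p : ℝ) (hp : 1 ≤ p) (u : X → ℝ) (hu : MemLp u (ENNReal.ofReal p) ν)
    (lam : ℝ) (hlam : 0 < lam) :
    ENNReal.ofReal (lam ^ p) *
      (ν.prod ν) {q : X × X | lam ^ p * f (dist q.1 q.2) ≤ |u q.1 - u q.2| ^ p} ≤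
    ENNReal.ofReal ((2 : ℝ) ^ (p + 1) * C_fA) *
      ∫⁻ x, ENNReal.ofReal (|u x| ^ p) ∂ν := by
  classical
  have hp0 : 0 < p := lt_of_lt_of_le one_pos hp
  have hlamp : 0 < lam ^ p := Real.rpow_pos_of_pos hlam p
  have h2p : (0:ℝ) < (2:ℝ) ^ p := Real.rpow_pos_of_pos two_pos p
  -- measurable representative
  set g : X → ℝ := hu.1.mk u with hgdef
  have hgm : Measurable g := hu.1.stronglyMeasurable_mk.measurable
  have hug : u =ᵐ[ν] g := hu.1.ae_eq_mk
  set N : Set X := toMeasurable ν {x | u x ≠ g x} with hNdef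
  have hNnull : ν N = 0 := by
    rw [hNdef, measure_toMeasurable]
    exact hug
  have hNsub : {x | u x ≠ g x} ⊆ N := subset_toMeasurable _ _
  -- monotone extension of f
  set F : ℝ → ℝ := fun r => f (max r 0) with hFdef
  have hFmono : Monotone F := fun a b hab =>
    hmono (Set.mem_Ici.2 (le_max_right a 0)) (Set.mem_Ici.2 (le_max_right b 0))
      (max_le_max hab le_rfl)
  have hFm : Measurable F := hFmono.measurable
  have hFd : ∀ q : X × X, F (dist q.1 q.2) = f (dist q.1 q.2) := fun q => by
    rw [hFdef]; simp [max_eq_left dist_nonneg]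
  -- The good sets
  set A : Set (X × X) := {q | lam ^ p * F (dist q.1 q.2) ≤ 2 ^ p * |g q.1| ^ p} with hAdef
  set B : Set (X × X) := {q | lam ^ p * F (dist q.1 q.2) ≤ 2 ^ p * |g q.2| ^ p} with hBdef
  have hAm : MeasurableSet A := by
    apply measurableSet_le
    · exact (measurable_const.mul (hFm.comp measurable_dist))
    · exact measurable_const.mul ((hgm.comp measurable_fst).abs.pow_const p)
  have hBm : MeasurableSet B := by
    apply measurableSet_le
    · exact (measurable_const.mul (hFm.comp measurable_dist))
    · exact measurable_const.mul ((hgm.comp measurable_snd).abs.pow_const p)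
  -- inclusion
  have hsub : {q : X × X | lam ^ p * f (dist q.1 q.2) ≤ |u q.1 - u q.2| ^ p} ⊆
      (A ∪ B) ∪ (N ×ˢ Set.univ ∪ Set.univ ×ˢ N) := by
    rintro ⟨x, y⟩ hq
    simp only [Set.mem_setOf_eq] at hq
    by_cases hx : x ∈ N
    · exact Or.inr (Or.inl ⟨hx, trivial⟩)
    by_cases hy : y ∈ N
    · exact Or.inr (Or.inr ⟨trivial, hy⟩)
    have hxg : u x = g x := by
      by_contra h; exact hx (hNsub h)
    have hyg : u y = g y := by
      by_contra h; exact hy (hNsub h)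
    left
    have key : |u x - u y| ^ p ≤ 2 ^ p * |g x| ^ p ∨
        |u x - u y| ^ p ≤ 2 ^ p * |g y| ^ p := by
      rcases le_total |u y| |u x| with hle | hle
      · left
        calc |u x - u y| ^ p ≤ (2 * |g x|) ^ p := by
              apply Real.rpow_le_rpow (abs_nonneg _) _ hp0.le
              calc |u x - u y| ≤ |u x| + |u y| := abs_sub _ _
                _ ≤ 2 * |g x| := by rw [← hxg]; linarith
          _ = 2 ^ p * |g x| ^ p := Real.mul_rpow (by norm_num) (abs_nonneg _)
      · right
        calc |u x - u y| ^ p ≤ (2 * |g y|) ^ p := by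
              apply Real.rpow_le_rpow (abs_nonneg _) _ hp0.le
              calc |u x - u y| ≤ |u x| + |u y| := abs_sub _ _
                _ ≤ 2 * |g y| := by rw [← hyg]; linarith
          _ = 2 ^ p * |g y| ^ p := Real.mul_rpow (by norm_num) (abs_nonneg _)
    rcases key with h | h
    · left; simp only [hAdef, Set.mem_setOf_eq, hFd ⟨x, y⟩]
      exact hq.trans h
    · right; simp only [hBdef, Set.mem_setOf_eq, hFd ⟨x, y⟩]
      exact hq.trans h
  -- null parts
  have hnull1 : (ν.prod ν) (N ×ˢ Set.univ) = 0 := by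
    rw [Measure.prod_prod, hNnull, zero_mul]
  have hnull2 : (ν.prod ν) (Set.univ ×ˢ N) = 0 := by
    rw [Measure.prod_prod, hNnull, mul_zero]
  -- bound on A via sections
  have hsec : ∀ x : X,
      ν (Prod.mk x ⁻¹' A) ≤ ENNReal.ofReal (C_fA * (2 ^ p * |g x| ^ p / lam ^ p)) := by
    intro x
    have heq : Prod.mk x ⁻¹' A = {y | f (dist x y) ≤ 2 ^ p * |g x| ^ p / lam ^ p} := by
      ext y
      simp only [hAdef, Set.mem_preimage, Set.mem_setOf_eq, hFd ⟨x, y⟩]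
      rw [le_div_iff₀ hlamp, mul_comm]
    rw [heq]
    exact key_ball_bound ν f hconv hmono hf0 C_fA hCfA hreg x _
      (by positivity)
  have hAbound : (ν.prod ν) A ≤
      ENNReal.ofReal (C_fA * (2 ^ p / lam ^ p)) * ∫⁻ x, ENNReal.ofReal (|u x| ^ p) ∂ν := by
    rw [Measure.prod_apply hAm]
    calc ∫⁻ x, ν (Prod.mk x ⁻¹' A) ∂ν
        ≤ ∫⁻ x, ENNReal.ofReal (C_fA * (2 ^ p / lam ^ p)) * ENNReal.ofReal (|g x| ^ p) ∂ν := by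
          apply lintegral_mono
          intro x
          refine (hsec x).trans (le_of_eq ?_)
          show ENNReal.ofReal (C_fA * (2 ^ p * |g x| ^ p / lam ^ p)) =
            ENNReal.ofReal (C_fA * (2 ^ p / lam ^ p)) * ENNReal.ofReal (|g x| ^ p)
          rw [← ENNReal.ofReal_mul (by positivity)]
          congr 1
          ring
      _ = ENNReal.ofReal (C_fA * (2 ^ p / lam ^ p)) * ∫⁻ x, ENNReal.ofReal (|g x| ^ p) ∂ν :=
          lintegral_const_mul' _ _ ENNReal.ofReal_ne_top
      _ = ENNReal.ofReal (C_fA * (2 ^ p / lam ^ p)) * ∫⁻ x, ENNReal.ofReal (|u x| ^ p) ∂ν := by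
          congr 1
          apply lintegral_congr_ae
          filter_upwards [hug] with x hx
          rw [hx]
  -- B has the same measure as A
  have hBA : (ν.prod ν) B = (ν.prod ν) A := by
    have hswap : B = Prod.swap ⁻¹' A := by
      ext ⟨x, y⟩
      simp only [hAdef, hBdef, Set.mem_setOf_eq, Set.mem_preimage, Prod.swap_prod_mk,
        dist_comm]
    rw [hswap, ← Measure.map_apply measurable_swap hAm, Measure.prod_swap]
  -- put it together
  have hE : (ν.prod ν) {q : X × X | lam ^ p * f (dist q.1 q.2) ≤ |u q.1 - u q.2| ^ p} ≤
      2 * ((ν.prod ν) A) := by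
    calc (ν.prod ν) {q : X × X | lam ^ p * f (dist q.1 q.2) ≤ |u q.1 - u q.2| ^ p}
        ≤ (ν.prod ν) ((A ∪ B) ∪ (N ×ˢ Set.univ ∪ Set.univ ×ˢ N)) := measure_mono hsub
      _ ≤ (ν.prod ν) (A ∪ B) + (ν.prod ν) (N ×ˢ Set.univ ∪ Set.univ ×ˢ N) :=
          measure_union_le _ _
      _ ≤ ((ν.prod ν) A + (ν.prod ν) B) + ((ν.prod ν) (N ×ˢ Set.univ) + (ν.prod ν) (Set.univ ×ˢ N)) :=
          add_le_add (measure_union_le _ _) (measure_union_le _ _)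
      _ = 2 * ((ν.prod ν) A) := by rw [hBA, hnull1, hnull2, add_zero, add_zero, two_mul]
  calc ENNReal.ofReal (lam ^ p) *
      (ν.prod ν) {q : X × X | lam ^ p * f (dist q.1 q.2) ≤ |u q.1 - u q.2| ^ p}
      ≤ ENNReal.ofReal (lam ^ p) * (2 * ((ν.prod ν) A)) := by
        exact mul_le_mul_right hE _
    _ ≤ ENNReal.ofReal (lam ^ p) * (2 * (ENNReal.ofReal (C_fA * (2 ^ p / lam ^ p)) *
        ∫⁻ x, ENNReal.ofReal (|u x| ^ p) ∂ν)) := by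
        exact mul_le_mul_right (mul_le_mul_right hAbound _) _
    _ = ENNReal.ofReal ((2 : ℝ) ^ (p + 1) * C_fA) * ∫⁻ x, ENNReal.ofReal (|u x| ^ p) ∂ν := by
        rw [← mul_assoc, ← mul_assoc]
        congr 1
        have h2 : (2 : ENNReal) = ENNReal.ofReal 2 := by norm_num
        rw [h2, ← ENNReal.ofReal_mul (by positivity), ← ENNReal.ofReal_mul (by positivity)]
        congr 1
        rw [Real.rpow_add_one (by norm_num : (2:ℝ) ≠ 0) p]
        field_simp
end
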